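/- arXiv:2004.10685 — 8 statements merged into one kernel-verified Lean document; each statement's English description precedes it below -/
import Mathlib

section
/- For all integers r ≥ 2 and 0 ≤ n' ≤ n, we have t_r(n') + ((r−1)/r)·n·(n−n') ≥ t_r(n) ≥ t_r(n') + ((r−1)/r)·n'·(n−n'). -/
open SimpleGraph

/-- The number of edges of a graph. -/
noncomputable def edgeCount {V : Type*} (G : SimpleGraph V) : ℕ := Nat.card G.edgeSet

/-- `t_r(n)`: the number of edges of the Turán graph `T_r(n)`. -/
noncomputable def turanNum (r n : ℕ) : ℕ := edgeCount (turanGraph n r)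

/-- `D_r(G)`: the minimum number of edges that must be removed from `G` to make it
`r`-partite (i.e. `r`-colorable). -/
noncomputable def minDel {V : Type*} (r : ℕ) (G : SimpleGraph V) : ℕ :=
  sInf {k | ∃ H : SimpleGraph V, H ≤ G ∧ H.Colorable r ∧ edgeCount G = edgeCount H + k}

/-- The blowup `G[n₁,…,n_k]` of a graph `G` on `Fin k`. -/
def blowup {k : ℕ} (G : SimpleGraph (Fin k)) (n : Fin k → ℕ) :
    SimpleGraph ((i : Fin k) × Fin (n i)) :=
  SimpleGraph.comap Sigma.fst G

/-- The adjacency relation of the pentagon `v₁v₂v₅v₄v₃` on `{0,…,4}` (0-indexed),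
i.e. the edges `v₁v₂, v₂v₅, v₅v₄, v₄v₃, v₃v₁`. -/
def pentAdj (a b : ℕ) : Prop :=
  (a = 0 ∧ b = 1) ∨ (a = 1 ∧ b = 0) ∨ (a = 1 ∧ b = 4) ∨ (a = 4 ∧ b = 1) ∨
  (a = 4 ∧ b = 3) ∨ (a = 3 ∧ b = 4) ∨ (a = 3 ∧ b = 2) ∨ (a = 2 ∧ b = 3) ∨
  (a = 2 ∧ b = 0) ∨ (a = 0 ∧ b = 2)

lemma pentAdj_symm {a b : ℕ} (h : pentAdj a b) : pentAdj b a := by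
  rcases h with ⟨rfl, rfl⟩|⟨rfl, rfl⟩|⟨rfl, rfl⟩|⟨rfl, rfl⟩|⟨rfl, rfl⟩|⟨rfl, rfl⟩|⟨rfl, rfl⟩|⟨rfl, rfl⟩|⟨rfl, rfl⟩|⟨rfl, rfl⟩ <;> simp [pentAdj]

/-- The graph `L_r` on `r+3` vertices: the first five vertices induce the pentagon
`v₁v₂v₅v₄v₃`, and all other pairs of distinct vertices are adjacent. -/
def Lgraph (r : ℕ) : SimpleGraph (Fin (r + 3)) where
  Adj a b := a ≠ b ∧ (5 ≤ (a : ℕ) ∨ 5 ≤ (b : ℕ) ∨ pentAdj (a : ℕ) (b : ℕ))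
  symm := ⟨fun a b h => ⟨h.1.symm, by
    rcases h.2 with h2 | h2 | h2
    · exact Or.inr (Or.inl h2)
    · exact Or.inl h2
    · exact Or.inr (Or.inr (pentAdj_symm h2))⟩⟩
  loopless := ⟨fun a h => h.1 rfl⟩

/-- The sequence of part sizes `x, y, y, nn 0, nn 1, …` for a blowup of `L_r`. -/
def pentSizes (x y : ℕ) (nn : ℕ → ℕ) : ℕ → ℕ
  | 0 => x
  | 1 => y
  | 2 => y
  | m + 3 => nn m

/-- The pentagon blowup `L_r[x, y, y, nn 0, …, nn (r-1)]`. -/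
def pentagonBlowup (r x y : ℕ) (nn : ℕ → ℕ) :
    SimpleGraph ((i : Fin (r + 3)) × Fin (pentSizes x y nn i.val)) :=
  blowup (Lgraph r) (fun i => pentSizes x y nn i.val)


lemma cnt (r n : ℕ) (hr : 0 < r) (a : ℕ) (ha : a < r) :
    ((Finset.range n).filter (fun b => b % r = a)).card
      = n / r + if a < n % r then 1 else 0 := by
  induction n with
  | zero => simp
  | succ n ih =>
    rw [Finset.range_add_one, Finset.filter_insert]
    have hsd : (n+1) / r = n / r + if r ∣ n + 1 then 1 else 0 := Nat.succ_div (a := n) (b := r)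
    have hb : n % r < r := Nat.mod_lt _ hr
    simp only [Nat.dvd_iff_mod_eq_zero] at hsd
    have hmod : (n+1) % r = if n % r + 1 = r then 0 else n % r + 1 := by
      by_cases hr1 : r = 1
      · subst hr1; simp [Nat.mod_one]
      · rw [Nat.add_mod, Nat.one_mod_eq_one.mpr hr1]
        split_ifs with h
        · rw [h, Nat.mod_self]
        · exact Nat.mod_eq_of_lt (by omega)
    by_cases hc : n % r = a
    · rw [if_pos hc, Finset.card_insert_of_notMem (by simp), ih]
      split_ifs at * <;> omega
    · rw [if_neg hc, ih]
      split_ifs at * <;> omega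

noncomputable def g (r n : ℕ) : ℕ :=
  ∑ a ∈ Finset.range n, ∑ b ∈ Finset.range n, if a % r ≠ b % r then 1 else 0

lemma row_sum (r n : ℕ) (hr : 0 < r) :
    (∑ b ∈ Finset.range n, if n % r ≠ b % r then 1 else 0) = n - n / r := by
  have hc := cnt r n hr (n % r) (Nat.mod_lt _ hr)
  simp only [lt_irrefl, if_neg (lt_irrefl (n % r))] at hc
  have : (∑ b ∈ Finset.range n, if n % r ≠ b % r then 1 else 0)
      = ((Finset.range n).filter (fun b => ¬ (b % r = n % r))).card := by
    rw [Finset.card_filter]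
    exact Finset.sum_congr rfl fun b _ => by simp [ne_comm, eq_comm]
  rw [this, Finset.filter_not, Finset.card_sdiff_of_subset (Finset.filter_subset _ _), hc,
    Finset.card_range]
  simp

lemma g_succ (r n : ℕ) (hr : 0 < r) : g r (n + 1) = g r n + 2 * (n - n / r) := by
  unfold g
  rw [Finset.sum_range_succ]
  have h1 : ∀ a, (∑ b ∈ Finset.range (n+1), if a % r ≠ b % r then 1 else 0)
      = (∑ b ∈ Finset.range n, if a % r ≠ b % r then 1 else 0)
        + (if a % r ≠ n % r then 1 else 0) := fun a => Finset.sum_range_succ _ n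
  simp only [h1]
  rw [Finset.sum_add_distrib, row_sum r n hr]
  have h2 : (∑ a ∈ Finset.range n, if a % r ≠ n % r then 1 else 0) = n - n / r := by
    rw [← row_sum r n hr]
    exact Finset.sum_congr rfl fun a _ => by simp [ne_comm]
  rw [h2]
  simp only [ne_eq, not_true_eq_false, if_false]
  omega

lemma two_mul_turanNum (r n : ℕ) : 2 * turanNum r n = g r n := by
  have h1 : turanNum r n = (turanGraph n r).edgeFinset.card := by
    rw [turanNum, edgeCount, Nat.card_coe_set_eq, Set.ncard_eq_toFinset_card',
      SimpleGraph.edgeFinset]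
  rw [h1, SimpleGraph.two_mul_card_edgeFinset]
  rw [Finset.card_filter]
  rw [Fintype.sum_prod_type]
  simp only [SimpleGraph.turanGraph]
  unfold g
  rw [← Fin.sum_univ_eq_sum_range
    (fun a => ∑ b ∈ Finset.range n, if a % r ≠ b % r then 1 else 0)]
  refine Finset.sum_congr rfl fun a _ => ?_
  rw [← Fin.sum_univ_eq_sum_range (fun b => if (a : ℕ) % r ≠ b % r then 1 else 0) n]
  refine Finset.sum_congr rfl fun b _ => ?_
  congr 1


lemma turan_succ (r n : ℕ) (hr : 0 < r) :
    turanNum r (n + 1) = turanNum r n + (n - n / r) := by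
  have h := g_succ r n hr
  rw [← two_mul_turanNum, ← two_mul_turanNum] at h
  omega

lemma incr_lb (r n : ℕ) (hr : 0 < r) :
    ((r : ℝ) - 1) / r * n ≤ ((n - n / r : ℕ) : ℝ) := by
  have hle : n / r ≤ n := Nat.div_le_self n r
  rw [Nat.cast_sub hle]
  have h1 : ((n / r : ℕ) : ℝ) ≤ (n : ℝ) / r := Nat.cast_div_le
  have hr' : (0 : ℝ) < r := by exact_mod_cast hr
  have h1' : ((n / r : ℕ) : ℝ) * r ≤ n := (le_div_iff₀ hr').mp h1
  rw [div_mul_eq_mul_div, div_le_iff₀ hr']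
  nlinarith [h1']

lemma incr_ub (r n : ℕ) (hr : 0 < r) :
    ((n - n / r : ℕ) : ℝ) ≤ ((r : ℝ) - 1) / r * (n + 1) := by
  have hle : n / r ≤ n := Nat.div_le_self n r
  rw [Nat.cast_sub hle]
  have hr' : (0 : ℝ) < r := by exact_mod_cast hr
  have hmul : n % r + r * (n / r) = n := Nat.mod_add_div n r
  have hmlt : n % r < r := Nat.mod_lt _ hr
  have h1 : (n : ℝ) + 1 - (r : ℝ) ≤ (r : ℝ) * ((n / r : ℕ) : ℝ) := by
    have : (n : ℕ) + 1 ≤ r * (n / r) + r := by omega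
    have := (Nat.cast_le (α := ℝ)).mpr this
    push_cast at this
    linarith
  rw [div_mul_eq_mul_div, le_div_iff₀ hr']
  nlinarith [h1]

lemma stmt5' (r n n' : ℕ) (hr : 2 ≤ r) (h : n' ≤ n) :
    (turanNum r n' : ℝ) + ((r : ℝ) - 1) / r * n * ((n : ℝ) - (n' : ℝ)) ≥ (turanNum r n : ℝ) ∧
    (turanNum r n : ℝ) ≥ (turanNum r n' : ℝ) + ((r : ℝ) - 1) / r * n' * ((n : ℝ) - (n' : ℝ)) := by
  have hr0 : 0 < r := by omega
  have hr' : (0 : ℝ) < r := by exact_mod_cast hr0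
  have hC : (0 : ℝ) ≤ ((r : ℝ) - 1) / r := by
    apply div_nonneg _ (le_of_lt hr')
    have : (2 : ℝ) ≤ r := by exact_mod_cast hr
    linarith
  induction n, h using Nat.le_induction with
  | base => constructor <;> simp
  | succ n hn ih =>
    obtain ⟨ihu, ihl⟩ := ih
    have hstep : (turanNum r (n+1) : ℝ) = (turanNum r n : ℝ) + ((n - n / r : ℕ) : ℝ) := by
      rw [turan_succ r n hr0]; push_cast [Nat.div_le_self n r]; ring
    have hlb := incr_lb r n hr0
    have hub := incr_ub r n hr0
    have hn' : (n' : ℝ) ≤ (n : ℝ) := by exact_mod_cast hn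
    constructor
    · rw [ge_iff_le, hstep]
      push_cast
      have key : ((r : ℝ) - 1) / r * n * ((n : ℝ) - n') + ((r : ℝ) - 1) / r * (n + 1)
          ≤ ((r : ℝ) - 1) / r * (n + 1) * ((n : ℝ) + 1 - n') := by
        nlinarith [hC, hn']
      linarith [ihu, hub]
    · rw [ge_iff_le, hstep]
      push_cast
      have key : ((r : ℝ) - 1) / r * n' * ((n : ℝ) + 1 - n')
          ≤ ((r : ℝ) - 1) / r * n' * ((n : ℝ) - n') + ((r : ℝ) - 1) / r * n := by
        nlinarith [hC, hn']
      have hlb' : ((r : ℝ) - 1) / r * n' ≤ ((n - n / r : ℕ) : ℝ) := by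
        refine le_trans ?_ hlb
        apply mul_le_mul_of_nonneg_left hn' hC
      linarith [ihl]

/-- For `r ≥ 2` and `0 ≤ n' ≤ n`,
`t_r(n') + ((r-1)/r)·n·(n-n') ≥ t_r(n) ≥ t_r(n') + ((r-1)/r)·n'·(n-n')`. -/
theorem stmt5 (r n n' : ℕ) (hr : 2 ≤ r) (h : n' ≤ n) :
    (turanNum r n' : ℝ) + ((r : ℝ) - 1) / r * n * ((n : ℝ) - (n' : ℝ)) ≥ (turanNum r n : ℝ) ∧
    (turanNum r n : ℝ) ≥ (turanNum r n' : ℝ) + ((r : ℝ) - 1) / r * n' * ((n : ℝ) - (n' : ℝ)) := by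
  exact stmt5' r n n' hr h
end

section
/- Let G be a (finite simple) graph with maximum degree Δ and let k ≥ 1 be an integer. If e(G) > (k−1)·Δ and Δ ≥ 2k−1, then G contains a matching of size k. -/
open SimpleGraph

/-!
Let `M` be a maximum matching with `m` edges and suppose every degree is at most `D`, where
`2m + 1 ≤ D`; then `e(G) ≤ mD`, which gives the theorem with `m ≤ k - 1`.

The vertices missed by `M`, together with the mates of matched vertices that have at least two
unmatched neighbours, form an independent set `Z` (`outerVerts G M`): an edge inside `Z` would
close an augmenting path of length at most 5. Counting from the other side,
`2e(G) = ∑_{w ∉ Z} (deg w + |N(w) ∩ Z|)`, and since `Zᶜ` consists of matched vertices this sum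
splits over the edges of `M`. Each edge of `M` contributes at most `2D`: a matched vertex has at
most `2m - 1 < D` matched neighbours, and the configurations that would push an edge over `2D`
contain augmenting paths of length at most 7.
-/

open Finset

theorem Finset.pairwiseDisjoint_of_sum_card_le_card_biUnion {ι α : Type*} [DecidableEq α]
    {s : Finset ι} {t : ι → Finset α} (h : ∑ i ∈ s, #(t i) ≤ #(s.biUnion t)) :
    (s : Set ι).PairwiseDisjoint t := by
  classical
  intro i hi j hj hij
  by_contra hdisj
  obtain ⟨v, hvi, hvj⟩ := not_disjoint_iff.mp hdisj
  have hsplit : s.biUnion t = (s.erase i).biUnion t ∪ t i := by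
    rw [← union_comm, ← biUnion_insert, insert_erase (mem_coe.mp hi)]
  have hoverlap : v ∈ (s.erase i).biUnion t ∩ t i :=
    mem_inter.mpr ⟨mem_biUnion.mpr ⟨j, mem_erase.mpr ⟨Ne.symm hij, hj⟩, hvj⟩, hvi⟩
  have := card_union_add_card_inter ((s.erase i).biUnion t) (t i)
  have := card_pos.mpr ⟨v, hoverlap⟩
  have := card_biUnion_le (s := s.erase i) (t := t)
  rw [← add_sum_erase s _ (mem_coe.mp hi), hsplit] at h
  omega

variable {V : Type*} [DecidableEq V] {G : SimpleGraph V}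

theorem SimpleGraph.card_toFinset_of_mem_edgeSet {e : Sym2 V} (he : e ∈ G.edgeSet) :
    #e.toFinset = 2 :=
  Sym2.card_toFinset_of_not_isDiag e (G.not_isDiag_of_mem_edgeSet he)

theorem SimpleGraph.two_mul_card_edgeFinset_eq_sum_compl [Fintype V] [DecidableRel G.Adj]
    {Z : Finset V} (hZ : G.IsIndepSet (Z : Set V)) :
    2 * #G.edgeFinset = ∑ w ∈ Zᶜ, (G.degree w + #(G.neighborFinset w ∩ Z)) := by
  have hdeg : ∀ z ∈ Z, G.degree z = #(Zᶜ.bipartiteAbove G.Adj z) := by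
    intro z hz
    rw [← G.card_neighborFinset_eq_degree]
    congr 1
    ext w
    simp only [mem_neighborFinset, bipartiteAbove, mem_filter, mem_compl,
      iff_and_self]
    exact fun hzw hwZ => hZ hz hwZ hzw.ne hzw
  have hnbr : ∀ w, G.neighborFinset w ∩ Z = Z.bipartiteBelow G.Adj w := by
    intro w
    ext z
    simp [bipartiteBelow, G.adj_comm, and_comm]
  rw [← G.sum_degrees_eq_twice_card_edges, ← sum_add_sum_compl Z, sum_add_distrib,
    sum_congr rfl hdeg, sum_card_bipartiteAbove_eq_sum_card_bipartiteBelow,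
    add_comm]
  simp only [hnbr]

theorem SimpleGraph.card_neighborFinset_inter_add_card_sdiff_lt [Fintype V] [DecidableRel G.Adj]
    {C X : Finset V} {w : V} (hw : w ∈ C) (hX : X ⊆ C) (hwX : w ∉ X) :
    #(G.neighborFinset w ∩ C) + #(X \ G.neighborFinset w) < #C := by
  have hsub : G.neighborFinset w ∩ C ∪ X \ G.neighborFinset w ⊆ C.erase w := by
    intro v hv
    rcases mem_union.mp hv with hv | hv
    · rw [mem_inter, mem_neighborFinset] at hv
      exact mem_erase.mpr ⟨hv.1.ne.symm, hv.2⟩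
    · rw [mem_sdiff] at hv
      exact mem_erase.mpr ⟨fun h => hwX (h ▸ hv.1), hX hv.1⟩
  have hdisj : Disjoint (G.neighborFinset w ∩ C) (X \ G.neighborFinset w) :=
    Finset.disjoint_left.mpr fun v hv hv' =>
      (mem_sdiff.mp hv').2 (mem_inter.mp hv).1
  have := card_le_card hsub
  rw [card_union_of_disjoint hdisj, card_erase_of_mem hw] at this
  have := card_pos.mpr ⟨w, hw⟩
  omega

def covered (M : Finset (Sym2 V)) : Finset V := M.biUnion Sym2.toFinset

theorem mem_covered {M : Finset (Sym2 V)} {v : V} : v ∈ covered M ↔ ∃ e ∈ M, v ∈ e := by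
  simp [covered]

theorem covered_mono {M N : Finset (Sym2 V)} (h : M ⊆ N) : covered M ⊆ covered N :=
  biUnion_subset_biUnion_of_subset_left _ h

theorem left_mem_covered {M : Finset (Sym2 V)} {a b : V} (h : s(a, b) ∈ M) : a ∈ covered M :=
  mem_covered.mpr ⟨_, h, Sym2.mem_mk_left a b⟩

theorem right_mem_covered {M : Finset (Sym2 V)} {a b : V} (h : s(a, b) ∈ M) : b ∈ covered M :=
  mem_covered.mpr ⟨_, h, Sym2.mem_mk_right a b⟩

theorem covered_union (M N : Finset (Sym2 V)) : covered (M ∪ N) = covered M ∪ covered N :=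
  union_biUnion

structure IsEdgeMatching (G : SimpleGraph V) (M : Finset (Sym2 V)) : Prop where
  mem_edgeSet : ∀ e ∈ M, e ∈ G.edgeSet
  pairwiseDisjoint : (M : Set (Sym2 V)).PairwiseDisjoint Sym2.toFinset

namespace IsEdgeMatching

theorem of_card_le {M : Finset (Sym2 V)} (hM : ∀ e ∈ M, e ∈ G.edgeSet)
    (hcard : 2 * #M ≤ #(covered M)) : IsEdgeMatching G M := by
  refine ⟨hM, Finset.pairwiseDisjoint_of_sum_card_le_card_biUnion ?_⟩
  rwa [sum_congr rfl fun e he => G.card_toFinset_of_mem_edgeSet (hM e he), sum_const, smul_eq_mul,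
    mul_comm]

variable {M : Finset (Sym2 V)} (hM : IsEdgeMatching G M)
include hM

theorem card_covered : #(covered M) = 2 * #M := by
  rw [covered, card_biUnion hM.pairwiseDisjoint,
    sum_congr rfl fun e he => G.card_toFinset_of_mem_edgeSet (hM.mem_edgeSet e he)]
  simp [mul_comm]

theorem subset {N : Finset (Sym2 V)} (h : N ⊆ M) : IsEdgeMatching G N :=
  ⟨fun e he => hM.mem_edgeSet e (h he), hM.pairwiseDisjoint.subset (by simpa using h)⟩

theorem eq_of_mem {a b c : V} (hab : s(a, b) ∈ M) (hac : s(a, c) ∈ M) : b = c := by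
  by_contra hbc
  have hne : s(a, b) ≠ s(a, c) := fun h => hbc (Sym2.congr_right.mp h)
  exact Finset.disjoint_left.mp (hM.pairwiseDisjoint hab hac hne)
    (Sym2.mem_toFinset.mpr (Sym2.mem_mk_left a b)) (Sym2.mem_toFinset.mpr (Sym2.mem_mk_left a c))

theorem eq_of_mem_right {a b c : V} (hac : s(a, c) ∈ M) (hbc : s(b, c) ∈ M) : a = b :=
  hM.eq_of_mem (a := c) (by rwa [Sym2.eq_swap]) (by rwa [Sym2.eq_swap])

theorem disjoint_covered_sdiff {S : Finset (Sym2 V)} (hS : S ⊆ M) :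
    Disjoint (covered (M \ S)) (covered S) := by
  simp only [covered, disjoint_biUnion_left, disjoint_biUnion_right]
  intro f hf e he
  have he' := mem_sdiff.mp he
  exact hM.pairwiseDisjoint he'.1 (hS hf) fun h => he'.2 (h ▸ hf)

theorem union {N : Finset (Sym2 V)} (hN : IsEdgeMatching G N)
    (hdisj : Disjoint (covered M) (covered N)) : IsEdgeMatching G (M ∪ N) := by
  have hMN : Disjoint M N := by
    refine Finset.disjoint_left.mpr fun e heM heN => ?_
    exact Finset.disjoint_left.mp hdisj (mem_covered.mpr ⟨e, heM, e.out_fst_mem⟩)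
      (mem_covered.mpr ⟨e, heN, e.out_fst_mem⟩)
  refine of_card_le (fun e he => ?_) ?_
  · rcases mem_union.mp he with he | he
    exacts [hM.mem_edgeSet e he, hN.mem_edgeSet e he]
  · rw [covered_union, card_union_of_disjoint hdisj, card_union_of_disjoint hMN,
      hM.card_covered, hN.card_covered]
    omega

def toSubgraph : G.Subgraph where
  verts := covered M
  Adj a b := s(a, b) ∈ M
  adj_sub h := hM.mem_edgeSet _ h
  edge_vert := left_mem_covered
  symm := ⟨fun _ _ h => by rwa [Sym2.eq_swap]⟩

theorem isMatching_toSubgraph : hM.toSubgraph.IsMatching := by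
  intro v hv
  obtain ⟨e, he, hve⟩ := mem_covered.mp hv
  obtain ⟨w, rfl⟩ := Sym2.mem_iff_exists.mp hve
  exact ⟨w, he, fun u hu => hM.eq_of_mem hu he⟩

theorem card_edgeSet_toSubgraph : Nat.card hM.toSubgraph.edgeSet = #M := by
  have : hM.toSubgraph.edgeSet = M := by
    ext e
    induction e using Sym2.ind
    rfl
  rw [this, Nat.card_coe_set_eq, Set.ncard_coe_finset]

end IsEdgeMatching

structure IsMaximumMatching (G : SimpleGraph V) (M : Finset (Sym2 V)) : Prop where
  isEdgeMatching : IsEdgeMatching G M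
  card_le : ∀ N, IsEdgeMatching G N → #N ≤ #M

theorem exists_isMaximumMatching [Fintype V] (G : SimpleGraph V) :
    ∃ M, IsMaximumMatching G M := by
  classical
  obtain ⟨M, hM, hmax⟩ := exists_max_image ({N | IsEdgeMatching G N} : Finset _) card
    ⟨∅, by simpa using IsEdgeMatching.of_card_le (G := G) (by simp) (by simp)⟩
  simp only [mem_filter, mem_univ, true_and] at hM hmax
  exact ⟨M, hM, hmax⟩

namespace IsMaximumMatching

variable {M : Finset (Sym2 V)} (hM : IsMaximumMatching G M)
include hM

/-- Otherwise `(M \ S) ∪ T` would be a matching with one edge more than `M`. -/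
theorem not_augment {S T : Finset (Sym2 V)} {x y : V} (hS : S ⊆ M)
    (hT : ∀ e ∈ T, e ∈ G.edgeSet) (hcard : #T ≤ #S + 1) (hxy : x ≠ y)
    (hx : x ∉ covered M) (hy : y ∉ covered M) (hcov : covered T = covered S ∪ {x, y}) :
    False := by
  have hSm := hM.isEdgeMatching.subset hS
  have hexposed : Disjoint (covered M) {x, y} := by simp [hx, hy]
  have hcovT : #(covered T) = 2 * #S + 2 := by
    rw [hcov, card_union_of_disjoint (hexposed.mono_left (covered_mono hS)),
      hSm.card_covered, card_pair hxy]
  have hTm : IsEdgeMatching G T := IsEdgeMatching.of_card_le hT (by omega)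
  have hdisj : Disjoint (covered (M \ S)) (covered T) := by
    rw [hcov, disjoint_union_right]
    exact ⟨hM.isEdgeMatching.disjoint_covered_sdiff hS,
      hexposed.mono_left (covered_mono sdiff_subset)⟩
  have hN := (hM.isEdgeMatching.subset sdiff_subset).union hTm hdisj
  have hcovN := hN.card_covered
  rw [covered_union, card_union_of_disjoint hdisj,
    (hM.isEdgeMatching.subset sdiff_subset).card_covered, hTm.card_covered,
    card_sdiff_of_subset hS] at hcovN
  have := hTm.card_covered
  have := hM.card_le _ hN
  have := card_le_card hS
  omega

theorem not_adj_of_not_mem_covered {x y : V} (hx : x ∉ covered M) (hy : y ∉ covered M) :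
    ¬ G.Adj x y := fun hxy =>
  hM.not_augment (S := ∅) (T := {s(x, y)}) (empty_subset _) (by simpa using hxy)
    (by simp) hxy.ne hx hy (by ext; simp [mem_covered])

theorem eq_of_adj_of_mem {a b x y : V} (hab : s(a, b) ∈ M) (hx : x ∉ covered M)
    (hy : y ∉ covered M) (hax : G.Adj a x) (hby : G.Adj b y) : x = y := by
  by_contra hxy
  refine hM.not_augment (S := {s(a, b)}) (T := {s(a, x), s(b, y)}) (by simpa using hab)
    (by simp [hax, hby]) (by simpa using card_le_two) hxy hx hy ?_
  ext; simp [mem_covered]; tauto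

theorem not_adj_of_mem_of_mem {a b c d x y : V} (hab : s(a, b) ∈ M) (hcd : s(c, d) ∈ M)
    (hne : s(a, b) ≠ s(c, d)) (hx : x ∉ covered M) (hy : y ∉ covered M) (hxy : x ≠ y)
    (hax : G.Adj a x) (hcy : G.Adj c y) : ¬ G.Adj b d := by
  intro hbd
  refine hM.not_augment (S := {s(a, b), s(c, d)}) (T := {s(a, x), s(c, y), s(b, d)})
    (by simp [insert_subset_iff, hab, hcd]) (by simp [hax, hcy, hbd])
    (by rw [card_pair hne]; exact card_le_three) hxy hx hy ?_
  ext; simp [mem_covered]; tauto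

theorem false_of_mem_of_mem_of_mem {a b c d u v x y : V} (hab : s(a, b) ∈ M)
    (hcd : s(c, d) ∈ M) (huv : s(u, v) ∈ M) (h₁ : s(a, b) ≠ s(c, d)) (h₂ : s(a, b) ≠ s(u, v))
    (h₃ : s(c, d) ≠ s(u, v)) (hx : x ∉ covered M) (hy : y ∉ covered M) (hxy : x ≠ y)
    (hax : G.Adj a x) (hcy : G.Adj c y) (hbu : G.Adj b u) (hdv : G.Adj d v) : False := by
  refine hM.not_augment (S := {s(a, b), s(c, d), s(u, v)})
    (T := {s(a, x), s(c, y), s(b, u), s(d, v)})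
    (by simp [insert_subset_iff, hab, hcd, huv]) (by simp [hax, hcy, hbu, hdv])
    (by rw [card_eq_three.mpr ⟨_, _, _, h₁, h₂, h₃, rfl⟩]; exact card_le_four)
    hxy hx hy ?_
  ext; simp [mem_covered]; tauto

end IsMaximumMatching

variable [Fintype V] [DecidableRel G.Adj]

variable (G) in
def exposedNbrs (M : Finset (Sym2 V)) (w : V) : Finset V :=
  G.neighborFinset w \ covered M

theorem mem_exposedNbrs {M : Finset (Sym2 V)} {w x : V} :
    x ∈ exposedNbrs G M w ↔ G.Adj w x ∧ x ∉ covered M := by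
  simp [exposedNbrs]

variable (G) in
def flexMates (M : Finset (Sym2 V)) : Finset V :=
  {b | ∃ a, s(a, b) ∈ M ∧ 2 ≤ #(exposedNbrs G M a)}

variable (G) in
def outerVerts (M : Finset (Sym2 V)) : Finset V :=
  (covered M)ᶜ ∪ flexMates G M

theorem mem_flexMates {M : Finset (Sym2 V)} {b : V} :
    b ∈ flexMates G M ↔ ∃ a, s(a, b) ∈ M ∧ 2 ≤ #(exposedNbrs G M a) := by
  simp [flexMates]

theorem flexMates_subset_covered (M : Finset (Sym2 V)) : flexMates G M ⊆ covered M := by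
  intro b hb
  obtain ⟨a, hab, -⟩ := mem_flexMates.mp hb
  exact right_mem_covered hab

theorem card_neighborFinset_inter_outerVerts (M : Finset (Sym2 V)) (w : V) :
    #(G.neighborFinset w ∩ outerVerts G M) =
      #(exposedNbrs G M w) + #(G.neighborFinset w ∩ flexMates G M) := by
  rw [outerVerts, inter_union_distrib_left, card_union_of_disjoint, exposedNbrs,
    sdiff_eq_inter_compl]
  exact Finset.disjoint_left.mpr fun v hv hv' =>
    (mem_compl.mp (mem_inter.mp hv).2)
      (flexMates_subset_covered M (mem_inter.mp hv').2)

variable (G) in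
/-- The summand of `two_mul_card_edgeFinset_eq_sum_compl` for `Z = outerVerts G M`, extended by
zero to `flexMates G M` so that it can be summed over all matched vertices. -/
def charge (M : Finset (Sym2 V)) (w : V) : ℕ :=
  if w ∈ flexMates G M then 0 else G.degree w + #(G.neighborFinset w ∩ outerVerts G M)

theorem charge_le_two_mul_degree (M : Finset (Sym2 V)) (w : V) :
    charge G M w ≤ 2 * G.degree w := by
  have := card_le_card (inter_subset_left (s₁ := G.neighborFinset w)
    (s₂ := outerVerts G M))
  rw [G.card_neighborFinset_eq_degree] at this
  unfold charge
  split_ifs <;> omega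

namespace IsMaximumMatching

variable {M : Finset (Sym2 V)} (hM : IsMaximumMatching G M)
include hM

theorem exposedNbrs_eq_empty {b : V} (hb : b ∈ flexMates G M) : exposedNbrs G M b = ∅ := by
  obtain ⟨a, hab, ha⟩ := mem_flexMates.mp hb
  refine eq_empty_of_forall_notMem fun y hy => ?_
  obtain ⟨x, hx, hxy⟩ := exists_mem_ne ha y
  rw [mem_exposedNbrs] at hx hy
  exact hxy (hM.eq_of_adj_of_mem hab hx.2 hy.2 hx.1 hy.1)

theorem mem_flexMates_iff {a b : V} (hab : s(a, b) ∈ M) :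
    b ∈ flexMates G M ↔ 2 ≤ #(exposedNbrs G M a) := by
  refine ⟨fun hb => ?_, fun ha => mem_flexMates.mpr ⟨a, hab, ha⟩⟩
  obtain ⟨a', ha'b, ha'⟩ := mem_flexMates.mp hb
  rwa [hM.isEdgeMatching.eq_of_mem_right hab ha'b]

theorem not_adj_flexMates {a b b' : V} (hab : s(a, b) ∈ M)
    (ha : (exposedNbrs G M a).Nonempty) (hb' : b' ∈ flexMates G M) : ¬ G.Adj b b' := by
  intro hbb'
  obtain ⟨a', ha'b', ha'⟩ := mem_flexMates.mp hb'
  obtain ⟨y, hy⟩ := ha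
  obtain ⟨x, hx, hxy⟩ := exists_mem_ne ha' y
  rw [mem_exposedNbrs] at hx hy
  have hne : s(a', b') ≠ s(a, b) := by
    intro h
    rcases Sym2.eq_iff.mp h with ⟨-, rfl⟩ | ⟨rfl, rfl⟩
    · exact G.irrefl hbb'
    · exact notMem_empty y (hM.exposedNbrs_eq_empty hb' ▸ mem_exposedNbrs.mpr hy)
  exact hM.not_adj_of_mem_of_mem ha'b' hab hne hx.2 hy.2 hxy hx.1 hy.1 hbb'.symm

theorem isIndepSet_outerVerts : G.IsIndepSet (outerVerts G M : Set V) := by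
  intro u hu v hv _ huv
  simp only [outerVerts, coe_union, coe_compl, Set.mem_union, Set.mem_compl_iff,
    mem_coe] at hu hv
  rcases hu with hu | hu <;> rcases hv with hv | hv
  · exact hM.not_adj_of_not_mem_covered hu hv huv
  · exact notMem_empty u (hM.exposedNbrs_eq_empty hv ▸ mem_exposedNbrs.mpr ⟨huv.symm, hu⟩)
  · exact notMem_empty v (hM.exposedNbrs_eq_empty hu ▸ mem_exposedNbrs.mpr ⟨huv, hv⟩)
  · obtain ⟨a, hau, ha⟩ := mem_flexMates.mp hu
    exact hM.not_adj_flexMates hau (card_pos.mp (by omega)) hv huv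

theorem card_inter_flexMates_le_one {a b : V} (hab : s(a, b) ∈ M)
    (ha : a ∉ flexMates G M) (hb : b ∉ flexMates G M)
    (hbF : (G.neighborFinset b ∩ flexMates G M).Nonempty) :
    #(G.neighborFinset a ∩ flexMates G M) ≤ 1 := by
  obtain ⟨b₂, hb₂⟩ := hbF
  rw [mem_inter, mem_neighborFinset] at hb₂
  obtain ⟨a₂, ha₂b₂, ha₂⟩ := mem_flexMates.mp hb₂.2
  suffices ∀ b₁ ∈ G.neighborFinset a ∩ flexMates G M, b₁ = b₂ from
    card_le_one.mpr fun b₁ hb₁ b₁' hb₁' => (this b₁ hb₁).trans (this b₁' hb₁').symm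
  intro b₁ hb₁
  rw [mem_inter, mem_neighborFinset] at hb₁
  by_contra h12
  obtain ⟨a₁, ha₁b₁, ha₁⟩ := mem_flexMates.mp hb₁.2
  obtain ⟨x, hx⟩ := card_pos.mp (by omega : 0 < #(exposedNbrs G M a₁))
  obtain ⟨y, hy, hyx⟩ := exists_mem_ne ha₂ x
  rw [mem_exposedNbrs] at hx hy
  have hne_ab : ∀ {c d : V}, d ∈ flexMates G M → s(c, d) ≠ s(a, b) := fun hd h => by
    rcases Sym2.mem_iff.mp (h ▸ Sym2.mem_mk_right _ _) with rfl | rfl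
    exacts [ha hd, hb hd]
  have hne₁₂ : s(a₁, b₁) ≠ s(a₂, b₂) := by
    intro h
    rcases Sym2.eq_iff.mp h with ⟨-, h⟩ | ⟨rfl, -⟩
    · exact h12 h
    · simp [hM.exposedNbrs_eq_empty hb₂.2] at ha₁
  exact hM.false_of_mem_of_mem_of_mem ha₁b₁ ha₂b₂ hab hne₁₂ (hne_ab hb₁.2) (hne_ab hb₂.2)
    hx.2 hy.2 hyx.symm hx.1 hy.1 hb₁.1.symm hb₂.1.symm

theorem degree_add_card_flexMates_lt {w : V} (hw : w ∈ covered M) (hwF : w ∉ flexMates G M) :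
    G.degree w + #(flexMates G M) <
      #(exposedNbrs G M w) + #(G.neighborFinset w ∩ flexMates G M) + 2 * #M := by
  have := G.card_neighborFinset_inter_add_card_sdiff_lt hw (flexMates_subset_covered M) hwF
  have := card_sdiff_add_card_inter (G.neighborFinset w) (covered M)
  have := card_sdiff_add_card_inter (flexMates G M) (G.neighborFinset w)
  rw [inter_comm] at this
  rw [← G.card_neighborFinset_eq_degree, exposedNbrs, ← hM.isEdgeMatching.card_covered]
  omega

theorem neighborFinset_inter_flexMates_eq_empty {a b : V} (hab : s(a, b) ∈ M)
    (ha : (exposedNbrs G M a).Nonempty) : G.neighborFinset b ∩ flexMates G M = ∅ :=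
  eq_empty_of_forall_notMem fun v hv => by
    rw [mem_inter, mem_neighborFinset] at hv
    exact hM.not_adj_flexMates hab ha hv.2 hv.1

theorem charge_add_charge_le_of_not_mem {D : ℕ} (hdeg : ∀ v, G.degree v ≤ D)
    (hD : 2 * #M + 1 ≤ D) {a b : V} (hab : s(a, b) ∈ M) (ha : a ∉ flexMates G M)
    (hb : b ∉ flexMates G M) (ha1 : #(exposedNbrs G M a) ≤ 1) (hb1 : #(exposedNbrs G M b) ≤ 1) :
    charge G M a + charge G M b ≤ 2 * D := by
  have hba : s(b, a) ∈ M := by rwa [Sym2.eq_swap]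
  have hna := fun h => card_eq_zero.mpr (hM.neighborFinset_inter_flexMates_eq_empty hab h)
  have hnb := fun h => card_eq_zero.mpr (hM.neighborFinset_inter_flexMates_eq_empty hba h)
  have hFa := hM.card_inter_flexMates_le_one hab ha hb
  have hFb := hM.card_inter_flexMates_le_one hba hb ha
  simp only [← card_pos] at hna hnb hFa hFb
  have := card_le_card (inter_subset_right (s₁ := G.neighborFinset a) (s₂ := flexMates G M))
  have := card_le_card (inter_subset_right (s₁ := G.neighborFinset b) (s₂ := flexMates G M))
  have := hM.degree_add_card_flexMates_lt (left_mem_covered hab) ha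
  have := hM.degree_add_card_flexMates_lt (left_mem_covered hba) hb
  have := hdeg a
  have := hdeg b
  simp only [charge, if_neg ha, if_neg hb, card_neighborFinset_inter_outerVerts]
  omega

theorem charge_add_charge_le {D : ℕ} (hdeg : ∀ v, G.degree v ≤ D) (hD : 2 * #M + 1 ≤ D)
    {a b : V} (hab : s(a, b) ∈ M) : charge G M a + charge G M b ≤ 2 * D := by
  have hba : s(b, a) ∈ M := by rwa [Sym2.eq_swap]
  by_cases ha2 : 2 ≤ #(exposedNbrs G M a)
  · have : charge G M b = 0 := if_pos ((hM.mem_flexMates_iff hab).mpr ha2)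
    have := charge_le_two_mul_degree (G := G) M a
    have := hdeg a
    omega
  by_cases hb2 : 2 ≤ #(exposedNbrs G M b)
  · have : charge G M a = 0 := if_pos ((hM.mem_flexMates_iff hba).mpr hb2)
    have := charge_le_two_mul_degree (G := G) M b
    have := hdeg b
    omega
  exact hM.charge_add_charge_le_of_not_mem hdeg hD hab
    (fun h => hb2 ((hM.mem_flexMates_iff hba).mp h))
    (fun h => ha2 ((hM.mem_flexMates_iff hab).mp h)) (by omega) (by omega)

theorem card_edgeFinset_le {D : ℕ} (hdeg : ∀ v, G.degree v ≤ D) (hD : 2 * #M + 1 ≤ D) :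
    #G.edgeFinset ≤ #M * D := by
  have hcompl : (outerVerts G M)ᶜ = {w ∈ covered M | w ∉ flexMates G M} := by
    ext; simp [outerVerts]
  have hsum : 2 * #G.edgeFinset = ∑ e ∈ M, ∑ v ∈ e.toFinset, charge G M v := by
    rw [G.two_mul_card_edgeFinset_eq_sum_compl hM.isIndepSet_outerVerts, hcompl,
      sum_filter, ← sum_biUnion hM.isEdgeMatching.pairwiseDisjoint]
    simp only [charge, ite_not]
    rfl
  have hedge : ∀ e ∈ M, ∑ v ∈ e.toFinset, charge G M v ≤ 2 * D := by
    intro e he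
    induction e using Sym2.ind with
    | _ a b =>
      rw [Sym2.toFinset_mk_eq, sum_pair (hM.isEdgeMatching.mem_edgeSet _ he).ne]
      exact hM.charge_add_charge_le hdeg hD he
  have := sum_le_sum hedge
  rw [← hsum, sum_const, smul_eq_mul] at this
  linarith

end IsMaximumMatching

theorem stmt7_general {V : Type} [Fintype V] (G : SimpleGraph V)
    [DecidableRel G.Adj] (D k : ℕ) (hD : G.maxDegree = D)
    (he : (k - 1) * D < edgeCount G) (h2 : 2 * k - 1 ≤ D) :
    ∃ M : G.Subgraph, M.IsMatching ∧ Nat.card M.edgeSet = k := by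
  classical
  obtain ⟨M, hM⟩ := exists_isMaximumMatching G
  have hk : k ≤ #M := by
    by_contra! hlt
    have hE := hM.card_edgeFinset_le (fun v => hD ▸ G.degree_le_maxDegree v) (by omega)
    rw [edgeCount, Nat.card_eq_fintype_card, ← G.edgeFinset_card] at he
    have := Nat.mul_le_mul_right D (show #M ≤ k - 1 by omega)
    omega
  obtain ⟨N, hNM, rfl⟩ := exists_subset_card_eq hk
  have hN := hM.isEdgeMatching.subset hNM
  exact ⟨hN.toSubgraph, hN.isMatching_toSubgraph, hN.card_edgeSet_toSubgraph⟩

/-- If `G` has maximum degree `Δ`, `k ≥ 1`, `e(G) > (k-1)Δ` and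
`Δ ≥ 2k - 1`, then `G` contains a matching of size `k`. -/
theorem stmt7 {V : Type} [Fintype V] [DecidableEq V] (G : SimpleGraph V)
    [DecidableRel G.Adj] (D k : ℕ) (hk : 1 ≤ k) (hD : G.maxDegree = D)
    (he : (k - 1) * D < edgeCount G) (h2 : 2 * k - 1 ≤ D) :
    ∃ M : G.Subgraph, M.IsMatching ∧ Nat.card M.edgeSet = k :=
  stmt7_general G D k hD he h2
end

section
/- Let r ≥ 2 and let n_1 ≤ n_2 ≤ … ≤ n_r be positive integers. Then any K_r-free subgraph of the complete r-partite graph K_{n_1,…,n_r} has at most e(K_{n_1,…,n_r}) − n_1·n_2 edges. -/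
open SimpleGraph

lemma stmt8_aux {r : ℕ} (n : Fin r → ℕ) (i j i' j' : Fin r) (hij : i < j) (hij' : i' < j')
    (t t' : ∀ k, Fin (n k)) (A : Fin (n i)) (B : Fin (n j)) (A' : Fin (n i')) (B' : Fin (n j'))
    (he : (s(⟨i, t i⟩, ⟨j, t j⟩) : Sym2 ((k : Fin r) × Fin (n k))) = s(⟨i', t' i'⟩, ⟨j', t' j'⟩))
    (hu : Function.update (Function.update t i A) j B
        = Function.update (Function.update t' i' A') j' B') :
    t = t' ∧ (A : ℕ) = (A' : ℕ) ∧ (B : ℕ) = (B' : ℕ) := by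
  rw [Sym2.eq_iff] at he
  rcases he with ⟨h1, h2⟩ | ⟨h1, h2⟩
  · have hi : i = i' := congrArg Sigma.fst h1
    subst hi
    have hj : j = j' := congrArg Sigma.fst h2
    subst hj
    have hti : t i = t' i := by simpa using h1
    have htj : t j = t' j := by simpa using h2
    have hAi := congrFun hu i
    rw [Function.update_of_ne hij.ne, Function.update_of_ne hij.ne,
      Function.update_self, Function.update_self] at hAi
    have hBj := congrFun hu j
    rw [Function.update_self, Function.update_self] at hBj
    refine ⟨funext fun k => ?_, congrArg Fin.val hAi, congrArg Fin.val hBj⟩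
    by_cases hki : k = i
    · subst hki; exact hti
    by_cases hkj : k = j
    · subst hkj; exact htj
    · have := congrFun hu k
      rwa [Function.update_of_ne hkj, Function.update_of_ne hki,
        Function.update_of_ne hkj, Function.update_of_ne hki] at this
  · have hi : i = j' := congrArg Sigma.fst h1
    have hj : j = i' := congrArg Sigma.fst h2
    exfalso
    rw [Fin.lt_def] at hij hij'
    omega


/-- For `r ≥ 2` and positive integers `n 0 ≤ n 1 ≤ … ≤ n (r-1)`, any
`K_r`-free subgraph of the complete `r`-partite graph with these part sizes misses at
least `n 0 · n 1` of its edges. -/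
theorem stmt8 (r : ℕ) (hr : 2 ≤ r) (n : Fin r → ℕ) (hpos : ∀ i, 0 < n i)
    (hmono : Monotone n) (H : SimpleGraph ((i : Fin r) × Fin (n i)))
    (hle : H ≤ blowup (⊤ : SimpleGraph (Fin r)) n) (hfree : H.CliqueFree r) :
    edgeCount H + n ⟨0, by omega⟩ * n ⟨1, by omega⟩ ≤
      edgeCount (blowup (⊤ : SimpleGraph (Fin r)) n) := by
  classical
  set K := blowup (⊤ : SimpleGraph (Fin r)) n with hK
  have hecH : edgeCount H = H.edgeFinset.card := by
    rw [edgeCount, Nat.card_eq_fintype_card, SimpleGraph.edgeFinset_card]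
  have hecK : edgeCount K = K.edgeFinset.card := by
    rw [edgeCount, Nat.card_eq_fintype_card, SimpleGraph.edgeFinset_card]
  set M : Finset (Sym2 ((i : Fin r) × Fin (n i))) := K.edgeFinset \ H.edgeFinset with hM
  have hsub : H.edgeFinset ⊆ K.edgeFinset := SimpleGraph.edgeFinset_mono hle
  have hsplit : edgeCount H + M.card = edgeCount K := by
    rw [hecH, hecK, hM]
    have := Finset.card_sdiff_add_card_eq_card hsub
    omega
  -- every transversal misses an edge in H
  have key : ∀ t : (k : Fin r) → Fin (n k), ∃ q : Fin r × Fin r, q.1 < q.2 ∧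
      ¬ H.Adj ⟨q.1, t q.1⟩ ⟨q.2, t q.2⟩ := by
    intro t
    by_contra hc
    push_neg at hc
    refine hfree (Finset.univ.image fun i => (⟨i, t i⟩ : (i : Fin r) × Fin (n i))) ⟨?_, ?_⟩
    · intro u hu v hv huv
      simp only [Finset.coe_image, Set.mem_image, Finset.mem_coe, Finset.mem_univ,
        true_and] at hu hv
      obtain ⟨i, rfl⟩ := hu
      obtain ⟨j, rfl⟩ := hv
      have hij : i ≠ j := by rintro rfl; exact huv rfl
      rcases hij.lt_or_gt with h | h
      · exact hc (i, j) h
      · exact (hc (j, i) h).symm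
    · rw [Finset.card_image_of_injective _ fun a b hab => congrArg Sigma.fst hab]
      simp
  choose q hqlt hqadj using key
  have h0le : ∀ i : Fin r, n ⟨0, by omega⟩ ≤ n i := fun i => hmono (by simp [Fin.le_def])
  have h1le : ∀ t, n ⟨1, by omega⟩ ≤ n ((q t).2) := fun t => by
    refine hmono ?_
    have h := hqlt t
    rw [Fin.lt_def] at h
    rw [Fin.le_def]
    have h1 : ((⟨1, by omega⟩ : Fin r) : ℕ) = 1 := rfl
    omega
  let F : Fin (n ⟨0, by omega⟩) × Fin (n ⟨1, by omega⟩) × ((k : Fin r) → Fin (n k)) →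
      Sym2 ((i : Fin r) × Fin (n i)) × ((k : Fin r) → Fin (n k)) :=
    fun x =>
      (s(⟨(q x.2.2).1, x.2.2 (q x.2.2).1⟩, ⟨(q x.2.2).2, x.2.2 (q x.2.2).2⟩),
       Function.update (Function.update x.2.2 (q x.2.2).1 (Fin.castLE (h0le _) x.1))
         (q x.2.2).2 (Fin.castLE (h1le x.2.2) x.2.1))
  have hmaps : ∀ x, F x ∈ M ×ˢ (Finset.univ : Finset ((k : Fin r) → Fin (n k))) := by
    intro x
    rw [Finset.mem_product]
    refine ⟨?_, Finset.mem_univ _⟩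
    rw [hM, Finset.mem_sdiff, SimpleGraph.mem_edgeFinset, SimpleGraph.mem_edgeFinset,
      SimpleGraph.mem_edgeSet, SimpleGraph.mem_edgeSet]
    refine ⟨?_, hqadj x.2.2⟩
    show ((⟨(q x.2.2).1, x.2.2 (q x.2.2).1⟩ : (i : Fin r) × Fin (n i)).1 ≠
      (⟨(q x.2.2).2, x.2.2 (q x.2.2).2⟩ : (i : Fin r) × Fin (n i)).1)
    exact (hqlt x.2.2).ne
  have hinj : Set.InjOn F ↑(Finset.univ :
      Finset (Fin (n ⟨0, by omega⟩) × Fin (n ⟨1, by omega⟩) × ((k : Fin r) → Fin (n k)))) := by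
    rintro ⟨a, b, t⟩ - ⟨a', b', t'⟩ - h
    have h1 : (F (a, b, t)).1 = (F (a', b', t')).1 := congrArg Prod.fst h
    have h2 : (F (a, b, t)).2 = (F (a', b', t')).2 := congrArg Prod.snd h
    obtain ⟨ht, hA, hB⟩ := stmt8_aux n _ _ _ _ (hqlt t) (hqlt t') t t' _ _ _ _ h1 h2
    subst ht
    simp only [Fin.coe_castLE] at hA hB
    exact Prod.ext (Fin.ext hA) (Prod.ext (Fin.ext hB) rfl)
  have hcard := Finset.card_le_card_of_injOn F (fun x _ => hmaps x) hinj
  rw [Finset.card_univ, Finset.card_product, Finset.card_univ, Fintype.card_prod,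
    Fintype.card_prod, Fintype.card_fin, Fintype.card_fin] at hcard
  have hTpos : 0 < Fintype.card ((k : Fin r) → Fin (n k)) := by
    have : Nonempty ((k : Fin r) → Fin (n k)) := ⟨fun k => ⟨0, hpos k⟩⟩
    exact Fintype.card_pos
  have hmain : n ⟨0, by omega⟩ * n ⟨1, by omega⟩ ≤ M.card := by
    have h : n ⟨0, by omega⟩ * n ⟨1, by omega⟩ * Fintype.card ((k : Fin r) → Fin (n k)) ≤
        M.card * Fintype.card ((k : Fin r) → Fin (n k)) := by
      calc n ⟨0, by omega⟩ * n ⟨1, by omega⟩ * Fintype.card ((k : Fin r) → Fin (n k))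
          = n ⟨0, by omega⟩ * (n ⟨1, by omega⟩ * Fintype.card ((k : Fin r) → Fin (n k))) := by
            ring
        _ ≤ M.card * Fintype.card ((k : Fin r) → Fin (n k)) := hcard
    exact Nat.le_of_mul_le_mul_right h hTpos
  omega
end

section
/- Let r ≥ 2, let G be a graph on k vertices, and let H = G[n_1,…,n_k] be a blowup of G. Then there exists an r-partite spanning subgraph G' of G such that the blowup G'[n_1,…,n_k] is a subgraph of H obtained by deleting exactly D_r(H) edges from H; in other words, some subgraph of H realizing D_r(H) is itself a blowup of an r-partite subgraph of G. -/
open SimpleGraph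

section Aux
open Finset
open scoped Classical

lemma edgeCount_eq_card {V : Type*} [Fintype V] (H : SimpleGraph V) :
    edgeCount H = H.edgeFinset.card := by
  rw [edgeCount, Nat.card_coe_set_eq, Set.ncard_eq_toFinset_card']
  congr 1

lemma edgeCount_mono {V : Type*} [Fintype V] {H K : SimpleGraph V} (h : H ≤ K) :
    edgeCount H ≤ edgeCount K := by
  rw [edgeCount_eq_card, edgeCount_eq_card]
  exact Finset.card_le_card (SimpleGraph.edgeFinset_mono h)

lemma sum_sigma_fin {k : ℕ} (nn : Fin k → ℕ) (f : ((i : Fin k) × Fin (nn i)) → ℕ) :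
    ∑ u : (i : Fin k) × Fin (nn i), f u = ∑ i : Fin k, ∑ a : Fin (nn i), f ⟨i,a⟩ := by
  rw [← Finset.univ_sigma_univ, Finset.sum_sigma]


variable {k r : ℕ} (G : SimpleGraph (Fin k)) (nn : Fin k → ℕ)

/-- the subgraph of `K` of properly `c`-colored edges -/
def colSub {V : Type*} {r : ℕ} (K : SimpleGraph V) (c : V → Fin r) : SimpleGraph V where
  Adj u v := K.Adj u v ∧ c u ≠ c v
  symm := ⟨fun u v h => ⟨K.adj_symm h.1, h.2.symm⟩⟩
  loopless := ⟨fun u h => h.2 rfl⟩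

noncomputable def Tcnt (c : ((i : Fin k) × Fin (nn i)) → Fin r) (i j : Fin k) : ℕ :=
  ∑ a : Fin (nn i), ∑ b : Fin (nn j), if c ⟨i,a⟩ ≠ c ⟨j,b⟩ then 1 else 0

noncomputable def pval (c : ((i : Fin k) × Fin (nn i)) → Fin r) : ℕ :=
  ∑ i : Fin k, ∑ j : Fin k, if G.Adj i j then Tcnt nn c i j else 0

lemma pval_eq (c : ((i : Fin k) × Fin (nn i)) → Fin r) :
    pval G nn c = 2 * (colSub (blowup G nn) c).edgeFinset.card := by
  rw [← SimpleGraph.sum_degrees_eq_twice_card_edges]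
  have hdeg : ∀ u : (i : Fin k) × Fin (nn i), (colSub (blowup G nn) c).degree u
      = ∑ v : (i : Fin k) × Fin (nn i),
        if (blowup G nn).Adj u v ∧ c u ≠ c v then 1 else 0 := by
    intro u
    rw [SimpleGraph.degree, SimpleGraph.neighborFinset_eq_filter, Finset.card_filter]
    exact Finset.sum_congr rfl fun v _ => if_congr Iff.rfl rfl rfl
  rw [Finset.sum_congr rfl fun u _ => hdeg u, sum_sigma_fin]
  unfold pval
  apply Finset.sum_congr rfl; intro i _
  have h1 : ∀ a : Fin (nn i), (∑ v : (j : Fin k) × Fin (nn j),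
      if (blowup G nn).Adj ⟨i,a⟩ v ∧ c ⟨i,a⟩ ≠ c v then 1 else 0) =
      ∑ j : Fin k, ∑ b : Fin (nn j),
        if G.Adj i j then (if c ⟨i,a⟩ ≠ c ⟨j,b⟩ then (1:ℕ) else 0) else 0 := by
    intro a
    rw [sum_sigma_fin]
    apply Finset.sum_congr rfl; intro j _
    apply Finset.sum_congr rfl; intro b _
    rw [← ite_and]
    exact if_congr (by simp [blowup]) rfl rfl
  rw [show (∑ a : Fin (nn i), ∑ v : (j : Fin k) × Fin (nn j),
      if (blowup G nn).Adj ⟨i,a⟩ v ∧ c ⟨i,a⟩ ≠ c v then (1:ℕ) else 0)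
      = ∑ j : Fin k, ∑ a : Fin (nn i), ∑ b : Fin (nn j),
        if G.Adj i j then (if c ⟨i,a⟩ ≠ c ⟨j,b⟩ then (1:ℕ) else 0) else 0 from by
    rw [Finset.sum_congr rfl fun a _ => h1 a]; exact Finset.sum_comm]
  apply Finset.sum_congr rfl; intro j _
  by_cases h : G.Adj i j
  · simp [h, Tcnt]
  · simp [h]

lemma Tcnt_symm (c : ((i : Fin k) × Fin (nn i)) → Fin r) (i j : Fin k) :
    Tcnt nn c j i = Tcnt nn c i j := by
  unfold Tcnt
  rw [Finset.sum_comm]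
  exact Finset.sum_congr rfl fun a _ => Finset.sum_congr rfl fun b _ =>
    if_congr ne_comm rfl rfl

lemma greedy_step (hr : 0 < r) (c : ((i : Fin k) × Fin (nn i)) → Fin r) (i : Fin k) :
    ∃ x : Fin r, pval G nn c ≤ pval G nn (fun u => if u.1 = i then x else c u) := by
  haveI : Nonempty (Fin r) := ⟨⟨0, hr⟩⟩
  set F : Fin r → ℕ := fun y => ∑ j : Fin k,
    if G.Adj i j then (∑ b : Fin (nn j), if y ≠ c ⟨j,b⟩ then 1 else 0) else 0 with hF
  obtain ⟨x, -, hx⟩ := Finset.exists_max_image Finset.univ F Finset.univ_nonempty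
  refine ⟨x, ?_⟩
  set c' : ((i : Fin k) × Fin (nn i)) → Fin r := fun u => if u.1 = i then x else c u with hc'
  set g : (((i : Fin k) × Fin (nn i)) → Fin r) → Fin k → Fin k → ℕ :=
    fun d i' j' => if G.Adj i' j' then Tcnt nn d i' j' else 0 with hg
  -- row sums
  have hgsymm : ∀ d i' j', g d i' j' = g d j' i' := by
    intro d i' j'
    exact if_congr (SimpleGraph.adj_comm G i' j') (Tcnt_symm nn d j' i') rfl
  have hrow : ∀ d : ((i : Fin k) × Fin (nn i)) → Fin r,
      pval G nn d = (∑ j' : Fin k, g d i j') + (∑ j' : Fin k, g d i j')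
        + ∑ i' ∈ ({i}ᶜ : Finset (Fin k)), ∑ j' ∈ ({i}ᶜ : Finset (Fin k)), g d i' j' := by
    intro d
    have h0 : g d i i = 0 := by simp [hg]
    have e1 : pval G nn d = ∑ i' : Fin k, ∑ j' : Fin k, g d i' j' := rfl
    have e2 : ∀ i' : Fin k, (∑ j' : Fin k, g d i' j')
        = g d i' i + ∑ j' ∈ ({i}ᶜ : Finset (Fin k)), g d i' j' :=
      fun i' => Fintype.sum_eq_add_sum_compl i _
    have e4 : ∑ i' ∈ ({i}ᶜ : Finset (Fin k)), g d i i' = ∑ j' : Fin k, g d i j' := by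
      rw [Fintype.sum_eq_add_sum_compl i (g d i), h0, zero_add]
    rw [e1, Fintype.sum_eq_add_sum_compl i,
      Finset.sum_congr rfl fun i' _ => e2 i', Finset.sum_add_distrib,
      Finset.sum_congr rfl fun i' (_ : i' ∈ ({i}ᶜ : Finset (Fin k))) => hgsymm d i' i, e4]
    ring
  -- rest is unchanged
  have hrest : ∑ i' ∈ ({i}ᶜ : Finset (Fin k)), ∑ j' ∈ ({i}ᶜ : Finset (Fin k)), g c' i' j'
      = ∑ i' ∈ ({i}ᶜ : Finset (Fin k)), ∑ j' ∈ ({i}ᶜ : Finset (Fin k)), g c i' j' := by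
    apply Finset.sum_congr rfl; intro i' hi'
    apply Finset.sum_congr rfl; intro j' hj'
    rw [Finset.mem_compl, Finset.mem_singleton] at hi' hj'
    have : Tcnt nn c' i' j' = Tcnt nn c i' j' := by
      apply Finset.sum_congr rfl; intro a _
      apply Finset.sum_congr rfl; intro b _
      rw [hc']
      simp only [if_neg hi', if_neg hj']
    rw [hg]
    simp only [this]
  -- row of c
  have hrowc : (∑ j' : Fin k, g c i j') = ∑ a : Fin (nn i), F (c ⟨i,a⟩) := by
    have e : ∀ j' : Fin k, g c i j'
        = ∑ a : Fin (nn i), (if G.Adj i j' then (∑ b : Fin (nn j'),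
            if c ⟨i,a⟩ ≠ c ⟨j',b⟩ then 1 else 0) else 0) := by
      intro j'
      rw [hg]
      by_cases h : G.Adj i j' <;> simp [h, Tcnt]
    rw [Finset.sum_congr rfl fun j' _ => e j', Finset.sum_comm]
  -- row of c'
  have hrowc' : (∑ j' : Fin k, g c' i j') = nn i * F x := by
    have e : ∀ j' : Fin k, g c' i j'
        = nn i * (if G.Adj i j' then (∑ b : Fin (nn j'),
            if x ≠ c ⟨j',b⟩ then 1 else 0) else 0) := by
      intro j'
      rw [hg]
      by_cases h : G.Adj i j'
      · have hne : j' ≠ i := h.ne'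
        have : Tcnt nn c' i j' = ∑ a : Fin (nn i), ∑ b : Fin (nn j'),
            if x ≠ c ⟨j',b⟩ then 1 else 0 := by
          apply Finset.sum_congr rfl; intro a _
          apply Finset.sum_congr rfl; intro b _
          rw [hc']
          simp [hne]
        simp [h, this, Finset.sum_const, Finset.card_univ, mul_comm]
      · simp [h]
    rw [Finset.sum_congr rfl fun j' _ => e j', ← Finset.mul_sum, hF]
  have hle : (∑ j' : Fin k, g c i j') ≤ ∑ j' : Fin k, g c' i j' := by
    rw [hrowc, hrowc']
    calc ∑ a : Fin (nn i), F (c ⟨i,a⟩) ≤ ∑ _a : Fin (nn i), F x :=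
          Finset.sum_le_sum fun a _ => hx _ (Finset.mem_univ _)
      _ = nn i * F x := by simp [Finset.sum_const, mul_comm]
  rw [hrow c, hrow c', hrest]
  omega

lemma greedy_list (hr : 0 < r) (l : List (Fin k)) (c : ((i : Fin k) × Fin (nn i)) → Fin r) :
    ∃ c' : ((i : Fin k) × Fin (nn i)) → Fin r, pval G nn c ≤ pval G nn c' ∧
      ∀ i ∈ l, ∀ a b : Fin (nn i), c' ⟨i,a⟩ = c' ⟨i,b⟩ := by
  induction l with
  | nil => exact ⟨c, le_refl _, by simp⟩
  | cons i l ih =>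
    obtain ⟨c₁, h1, h2⟩ := ih
    obtain ⟨x, hx⟩ := greedy_step G nn hr c₁ i
    refine ⟨fun u => if u.1 = i then x else c₁ u, le_trans h1 hx, ?_⟩
    intro j hj a b
    by_cases hji : j = i
    · subst hji; simp
    · simp only [if_neg hji]
      rcases List.mem_cons.mp hj with h | h
      · exact absurd h hji
      · exact h2 j h a b

lemma exists_const_coloring (hr : 0 < r) (c : ((i : Fin k) × Fin (nn i)) → Fin r) :
    ∃ f : Fin k → Fin r, pval G nn c ≤ pval G nn (fun u => f u.1) := by
  obtain ⟨c', h1, h2⟩ := greedy_list G nn hr (List.finRange k) c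
  refine ⟨fun i => if h : 0 < nn i then c' ⟨i, ⟨0, h⟩⟩ else ⟨0, hr⟩, ?_⟩
  have hcc : (fun (u : (i : Fin k) × Fin (nn i)) =>
      (if h : 0 < nn u.1 then c' ⟨u.1, ⟨0, h⟩⟩ else ⟨0, hr⟩ : Fin r)) = c' := by
    funext u
    obtain ⟨i, a⟩ := u
    have hp : 0 < nn i := a.pos
    simp only [dif_pos hp]
    exact h2 i (List.mem_finRange i) ⟨0, hp⟩ a
  rw [hcc]
  exact h1

lemma blowup_colSub (f : Fin k → Fin r) :
    blowup (colSub G f) nn = colSub (blowup G nn) (fun u => f u.1) := rfl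



end Aux

/-- For a blowup `H = G[n₁,…,n_k]`, there is an `r`-partite spanning
subgraph `G'` of `G` whose blowup `G'[n₁,…,n_k]` is a subgraph of `H` obtained by deleting
exactly `D_r(H)` edges. -/
theorem stmt9 {k : ℕ} (r : ℕ) (hr : 2 ≤ r) (G : SimpleGraph (Fin k)) (nn : Fin k → ℕ) :
    ∃ G' : SimpleGraph (Fin k), G' ≤ G ∧ G'.Colorable r ∧
      blowup G' nn ≤ blowup G nn ∧
      edgeCount (blowup G' nn) + minDel r (blowup G nn) = edgeCount (blowup G nn) := by

  have hr0 : 0 < r := by omega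
  haveI : Nonempty (Fin r) := ⟨⟨0, hr0⟩⟩
  set K := blowup G nn with hK
  have hble : ∀ f : Fin k → Fin r, blowup (colSub G f) nn ≤ K :=
    fun f u v h => h.1
  obtain ⟨f₀, -, hf₀⟩ := Finset.exists_max_image Finset.univ
    (fun f : Fin k → Fin r => edgeCount (blowup (colSub G f) nn)) Finset.univ_nonempty
  set M := edgeCount (blowup (colSub G f₀) nn) with hM
  have hMle : M ≤ edgeCount K := edgeCount_mono (hble f₀)
  set S : Set ℕ :=
    {d | ∃ H : SimpleGraph ((i : Fin k) × Fin (nn i)),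
      H ≤ K ∧ H.Colorable r ∧ edgeCount K = edgeCount H + d} with hS
  have hmem : edgeCount K - M ∈ S := by
    refine ⟨blowup (colSub G f₀) nn, hble f₀,
      ⟨SimpleGraph.Coloring.mk (fun u => f₀ u.1) (fun h => h.2)⟩, by omega⟩
  have hlb : ∀ d ∈ S, edgeCount K - M ≤ d := by
    rintro d ⟨H, hHK, ⟨C⟩, hEq⟩
    have h1 : H ≤ colSub K (⇑C) := fun u v h => ⟨hHK h, C.valid h⟩
    have h2 : edgeCount H ≤ edgeCount (colSub K (⇑C)) := edgeCount_mono h1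
    obtain ⟨f, hf⟩ := exists_const_coloring G nn hr0 (⇑C)
    have h3 : edgeCount (colSub K (⇑C)) ≤ edgeCount (colSub K (fun u => f u.1)) := by
      have e1 := pval_eq G nn (⇑C)
      have e2 := pval_eq G nn (fun u => f u.1)
      rw [hK, edgeCount_eq_card, edgeCount_eq_card]
      omega
    have h4 : edgeCount (colSub K (fun u => f u.1)) ≤ M := by
      rw [← blowup_colSub]
      exact hf₀ f (Finset.mem_univ f)
    omega
  have hsInf : minDel r K = edgeCount K - M := by
    rw [minDel]
    exact le_antisymm (Nat.sInf_le hmem) (le_csInf ⟨_, hmem⟩ hlb)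
  refine ⟨colSub G f₀, fun u v h => h.1,
    ⟨SimpleGraph.Coloring.mk f₀ (fun h => h.2)⟩, hble f₀, ?_⟩
  rw [hsInf]
  omega
end

section
/- Let r ≥ 2 and let G = L_r[x,y,y,n_1,…,n_r] be a pentagon-r-partite graph, so that x ≤ y ≤ n_i for every i ∈ [r]. Then D_r(G) = x·y. -/
open SimpleGraph

/-! ### Auxiliary lemmas -/

/-- `L_r` is not `r`-colorable: every map to `Fin r` has a monochromatic edge. -/
lemma lgraph_mono {r : ℕ} (hr : 2 ≤ r) (c : Fin (r+3) → Fin r) :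
    ∃ m n : Fin (r+3), (Lgraph r).Adj m n ∧ c m = c n := by
  by_contra hcon
  push_neg at hcon
  have hprop : ∀ a b : Fin (r+3), a.val ≠ b.val →
      (5 ≤ a.val ∨ 5 ≤ b.val ∨ pentAdj a.val b.val) → c a ≠ c b := by
    intro a b h1 h2
    exact hcon a b ⟨fun h => h1 (by rw [h]), h2⟩
  set T0 : Finset (Fin (r+3)) :=
    (Finset.univ : Finset (Fin (r-2))).image (fun j => (⟨j.val+5, by omega⟩ : Fin (r+3))) with hT0
  have hT0card : T0.card = r - 2 := by
    rw [hT0, Finset.card_image_of_injective _ (fun a b hab => by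
      simpa [Fin.ext_iff] using hab), Finset.card_univ, Fintype.card_fin]
  have hT0mem : ∀ t ∈ T0, 5 ≤ t.val := by
    intro t ht
    rw [hT0] at ht
    simp only [Finset.mem_image] at ht
    obtain ⟨j, _, rfl⟩ := ht
    simp
  have hinj : Set.InjOn c T0 := by
    intro a ha b hb hab
    by_contra hne
    exact hprop a b (fun h => hne (Fin.ext h)) (Or.inl (hT0mem a ha)) hab
  have hTcard : (T0.image c).card = r - 2 := by
    rw [Finset.card_image_of_injOn hinj, hT0card]
  set S : Finset (Fin r) := Finset.univ \ T0.image c with hS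
  have hScard : S.card = 2 := by
    rw [hS, Finset.card_sdiff_of_subset (Finset.subset_univ _), Finset.card_univ, Fintype.card_fin, hTcard]
    omega
  have hv : ∀ k : ℕ, (hk : k < 5) → c ⟨k, by omega⟩ ∈ S := by
    intro k hk
    rw [hS, Finset.mem_sdiff]
    refine ⟨Finset.mem_univ _, ?_⟩
    intro hmem
    rw [Finset.mem_image] at hmem
    obtain ⟨t, ht, hct⟩ := hmem
    exact hprop t ⟨k, by omega⟩ (by have := hT0mem t ht; simp; omega) (Or.inl (hT0mem t ht)) hct
  set c0 := c ⟨0, by omega⟩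
  set c1 := c ⟨1, by omega⟩
  set c2 := c ⟨2, by omega⟩
  set c3 := c ⟨3, by omega⟩
  set c4 := c ⟨4, by omega⟩
  have h01 : c0 ≠ c1 := hprop _ _ (by simp) (by simp [pentAdj])
  have hpair : S = {c0, c1} := by
    refine (Finset.eq_of_subset_of_card_le ?_ ?_).symm
    · intro z hz
      rw [Finset.mem_insert, Finset.mem_singleton] at hz
      rcases hz with rfl | rfl
      · exact hv 0 (by omega)
      · exact hv 1 (by omega)
    · rw [hScard, Finset.card_insert_of_notMem (by simpa using h01), Finset.card_singleton]
  have hmem2 : ∀ k : ℕ, (hk : k < 5) → c ⟨k, by omega⟩ = c0 ∨ c ⟨k, by omega⟩ = c1 := by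
    intro k hk
    have := hv k hk
    rw [hpair, Finset.mem_insert, Finset.mem_singleton] at this
    exact this
  have h14 : c1 ≠ c4 := hprop _ _ (by simp) (by simp [pentAdj])
  have h43 : c4 ≠ c3 := hprop _ _ (by simp) (by simp [pentAdj])
  have h32 : c3 ≠ c2 := hprop _ _ (by simp) (by simp [pentAdj])
  have h20 : c2 ≠ c0 := hprop _ _ (by simp) (by simp [pentAdj])
  have e4 := hmem2 4 (by omega)
  have e3 := hmem2 3 (by omega)
  have e2 := hmem2 2 (by omega)
  rcases e4 with e4 | e4
  · rcases e3 with e3 | e3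
    · exact h43 (e4.trans e3.symm)
    · rcases e2 with e2 | e2
      · exact h20 e2
      · exact h32 (e3.trans e2.symm)
  · exact h14 e4.symm

lemma pentSizes_ge {r x y : ℕ} {nn : ℕ → ℕ} (hxy : x ≤ y) (hyn : ∀ i < r, y ≤ nn i)
    (m : ℕ) (hm : m < r + 3) : x ≤ pentSizes x y nn m ∧ (1 ≤ m → y ≤ pentSizes x y nn m) := by
  match m with
  | 0 => exact ⟨le_rfl, by omega⟩
  | 1 => exact ⟨hxy, fun _ => le_rfl⟩
  | 2 => exact ⟨hxy, fun _ => le_rfl⟩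
  | k + 3 =>
    have := hyn k (by omega)
    exact ⟨le_trans hxy this, fun _ => this⟩

/-- The key lower bound: any `r`-coloring of the vertices of the pentagon blowup has at
least `x * y` monochromatic (ordered, normalized) adjacent pairs. -/
lemma mono_lb {r x y : ℕ} (hr : 2 ≤ r) {nn : ℕ → ℕ} (hxy : x ≤ y) (hyn : ∀ i < r, y ≤ nn i)
    (c : ((i : Fin (r+3)) × Fin (pentSizes x y nn i.val)) → Fin r) :
    x * y ≤ {p : ((i : Fin (r+3)) × Fin (pentSizes x y nn i.val)) ×
        ((i : Fin (r+3)) × Fin (pentSizes x y nn i.val)) |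
      (pentagonBlowup r x y nn).Adj p.1 p.2 ∧ c p.1 = c p.2 ∧ p.1.1 < p.2.1}.ncard := by
  classical
  rcases Nat.eq_zero_or_pos x with hx | hx
  · simp [hx]
  set s : Fin (r+3) → ℕ := fun i => pentSizes x y nn i.val with hs
  have hsx : ∀ i : Fin (r+3), x ≤ s i := fun i => (pentSizes_ge hxy hyn i.val i.isLt).1
  have hsy : ∀ i : Fin (r+3), 1 ≤ i.val → y ≤ s i :=
    fun i hi => (pentSizes_ge hxy hyn i.val i.isLt).2 hi
  set P := (i : Fin (r+3)) → Fin (s i) with hP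
  have hPpos : 0 < Fintype.card P := by
    apply Fintype.card_pos_iff.mpr
    exact ⟨fun i => ⟨0, lt_of_lt_of_le hx (hsx i)⟩⟩
  set M : Set (((i : Fin (r+3)) × Fin (pentSizes x y nn i.val)) ×
      ((i : Fin (r+3)) × Fin (pentSizes x y nn i.val))) :=
    {p | (pentagonBlowup r x y nn).Adj p.1 p.2 ∧ c p.1 = c p.2 ∧
    p.1.1 < p.2.1} with hM
  have key : ∀ f : P, ∃ p : ((i : Fin (r+3)) × Fin (pentSizes x y nn i.val)) ×
      ((i : Fin (r+3)) × Fin (pentSizes x y nn i.val)),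
      p ∈ M ∧ p.1.2 = f p.1.1 ∧ p.2.2 = f p.2.1 := by
    intro f
    obtain ⟨m, n, hadj, hc⟩ := lgraph_mono hr (fun i => c ⟨i, f i⟩)
    rcases lt_trichotomy m n with hlt | heq | hgt
    · exact ⟨(⟨m, f m⟩, ⟨n, f n⟩), ⟨hadj, hc, hlt⟩, rfl, rfl⟩
    · exact absurd heq hadj.ne
    · exact ⟨(⟨n, f n⟩, ⟨m, f m⟩), ⟨hadj.symm, hc.symm, hgt⟩, rfl, rfl⟩
  choose Φ hΦ using key
  have hfin : M.Finite := Set.toFinite M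
  set MF := hfin.toFinset with hMF
  have hsum : (Finset.univ : Finset P).card =
      ∑ p ∈ MF, (Finset.univ.filter (fun f : P => Φ f = p)).card :=
    Finset.card_eq_sum_card_fiberwise (fun f _ => hfin.mem_toFinset.mpr (hΦ f).1)
  have hfiber : ∀ p ∈ MF, (Finset.univ.filter (fun f : P => Φ f = p)).card * (x * y) ≤
      Fintype.card P := by
    intro p hp
    rw [hfin.mem_toFinset] at hp
    obtain ⟨hadj, hceq, hlt⟩ := hp
    set m := p.1.1 with hm
    set n := p.2.1 with hn
    have hmn : m ≠ n := Fin.ne_of_lt hlt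
    set FB := Finset.univ.filter (fun f : P => Φ f = p) with hFB
    have hfmem : ∀ f ∈ FB, f m = p.1.2 ∧ f n = p.2.2 := by
      intro f hf
      rw [hFB, Finset.mem_filter] at hf
      have h1 := (hΦ f).2.1
      have h2 := (hΦ f).2.2
      rw [hf.2] at h1 h2
      exact ⟨h1.symm, h2.symm⟩
    have hinj : Function.Injective (fun q : FB × Fin (s m) × Fin (s n) =>
        Function.update (Function.update (q.1 : P) m q.2.1) n q.2.2) := by
      rintro ⟨⟨f, hf⟩, a, b⟩ ⟨⟨f', hf'⟩, a', b'⟩ hq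
      simp only at hq
      have hbb : b = b' := by
        have := congrFun hq n
        simpa using this
      have haa : a = a' := by
        have := congrFun hq m
        simpa [Function.update_of_ne hmn] using this
      have hff : f = f' := by
        funext i
        by_cases hin : i = n
        · subst hin; rw [(hfmem f hf).2, (hfmem f' hf').2]
        · by_cases him : i = m
          · subst him; rw [(hfmem f hf).1, (hfmem f' hf').1]
          · have := congrFun hq i
            simpa [Function.update_of_ne hin, Function.update_of_ne him] using this
      subst hbb; subst haa; subst hff; rfl
    have hcard := Fintype.card_le_of_injective _ hinj
    simp only [Fintype.card_prod, Fintype.card_coe, Fintype.card_fin] at hcard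
    calc FB.card * (x * y) ≤ FB.card * (s m * s n) := by
          apply Nat.mul_le_mul_left
          apply Nat.mul_le_mul (hsx m) (hsy n ?_)
          have : m.val < n.val := hlt
          omega
      _ ≤ Fintype.card P := hcard
  have hfinal : Fintype.card P * (x * y) ≤ MF.card * Fintype.card P := by
    calc Fintype.card P * (x * y)
        = ∑ p ∈ MF, (Finset.univ.filter (fun f : P => Φ f = p)).card * (x * y) := by
          rw [← Finset.sum_mul, ← hsum, Finset.card_univ]
      _ ≤ ∑ p ∈ MF, Fintype.card P := Finset.sum_le_sum hfiber
      _ = MF.card * Fintype.card P := by rw [Finset.sum_const, smul_eq_mul]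
  have : x * y ≤ MF.card := by
    exact Nat.le_of_mul_le_mul_right
      (by linarith [hfinal] : (x*y) * Fintype.card P ≤ MF.card * Fintype.card P) hPpos
  rwa [Set.ncard_eq_toFinset_card _ hfin]

/-- The subgraph of the pentagon blowup with all edges between parts 0 and 1 removed. -/
def Hdel (r x y : ℕ) (nn : ℕ → ℕ) :
    SimpleGraph ((i : Fin (r + 3)) × Fin (pentSizes x y nn i.val)) where
  Adj u v := (pentagonBlowup r x y nn).Adj u v ∧
    ¬((u.1.val = 0 ∧ v.1.val = 1) ∨ (u.1.val = 1 ∧ v.1.val = 0))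
  symm := ⟨by
    rintro u v ⟨h1, h2⟩
    exact ⟨h1.symm, by tauto⟩⟩
  loopless := ⟨fun u h => (pentagonBlowup r x y nn).irrefl h.1⟩

lemma Hdel_le (r x y : ℕ) (nn : ℕ → ℕ) : Hdel r x y nn ≤ pentagonBlowup r x y nn :=
  fun _ _ h => h.1

lemma Hdel_colorable (r x y : ℕ) (hr : 2 ≤ r) (nn : ℕ → ℕ) :
    (Hdel r x y nn).Colorable r := by
  refine ⟨Coloring.mk (fun u => if u.1.val = 0 ∨ u.1.val = 1 ∨ u.1.val = 3 then ⟨0, by omega⟩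
    else if u.1.val = 2 ∨ u.1.val = 4 then ⟨1, by omega⟩
    else ⟨u.1.val - 3, by have := u.1.isLt; omega⟩) ?_⟩
  intro u v hadj heq
  obtain ⟨⟨hne, hor⟩, hnot⟩ := hadj
  have hne' : u.1.val ≠ v.1.val := fun h => hne (Fin.ext h)
  have hu := u.1.isLt
  have hv := v.1.isLt
  simp only [pentAdj] at hor
  split_ifs at heq with h1 h2 h3 h4 h5 h6 h7 h8 <;>
    simp only [Fin.mk.injEq] at heq <;> omega

lemma count_del (r x y : ℕ) (hr : 2 ≤ r) (nn : ℕ → ℕ) :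
    edgeCount (pentagonBlowup r x y nn) = edgeCount (Hdel r x y nn) + x * y := by
  classical
  set G := pentagonBlowup r x y nn with hG
  set H := Hdel r x y nn with hH
  have hsub : H.edgeSet ⊆ G.edgeSet := edgeSet_mono (Hdel_le r x y nn)
  set f : Fin x × Fin y → Sym2 ((i : Fin (r + 3)) × Fin (pentSizes x y nn i.val)) :=
    fun p => s(⟨(⟨0, by omega⟩ : Fin (r+3)), p.1⟩, ⟨(⟨1, by omega⟩ : Fin (r+3)), p.2⟩) with hf
  have hdiff : G.edgeSet \ H.edgeSet = f '' Set.univ := by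
    apply Set.eq_of_subset_of_subset
    · intro e
      induction e with
      | _ u v =>
        rintro ⟨heG, heH⟩
        rw [mem_edgeSet] at heG heH
        have hcond : (u.1.val = 0 ∧ v.1.val = 1) ∨ (u.1.val = 1 ∧ v.1.val = 0) := by
          by_contra hc
          exact heH ⟨heG, hc⟩
        obtain ⟨⟨mv, hmlt⟩, a⟩ := u
        obtain ⟨⟨nv, hnlt⟩, b⟩ := v
        rcases hcond with ⟨hm, hn⟩ | ⟨hm, hn⟩ <;>
          (simp only at hm hn; subst hm; subst hn)
        · exact ⟨(a, b), Set.mem_univ _, rfl⟩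
        · exact ⟨(b, a), Set.mem_univ _, Sym2.eq_swap⟩
    · rintro e ⟨⟨a, b⟩, -, rfl⟩
      constructor
      · rw [mem_edgeSet]
        exact ⟨by simp [Fin.ext_iff], Or.inr (Or.inr (by simp [pentAdj]))⟩
      · rw [mem_edgeSet]
        rintro ⟨-, hno⟩
        exact hno (Or.inl ⟨rfl, rfl⟩)
  have hinj : Function.Injective f := by
    rintro ⟨a, b⟩ ⟨a', b'⟩ h
    rw [hf, Sym2.eq_iff] at h
    rcases h with ⟨h1, h2⟩ | ⟨h1, h2⟩
    · injection h1 with hf1 hs1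
      injection h2 with hf2 hs2
      exact Prod.ext hs1 hs2
    · injection h1 with hf1 hs1
      exact absurd (congrArg Fin.val hf1) (by simp)
  have hcardD : (G.edgeSet \ H.edgeSet).ncard = x * y := by
    rw [hdiff, Set.ncard_image_of_injective _ hinj, Set.ncard_univ]
    simp [Nat.card_eq_fintype_card]
  have hkey := Set.ncard_diff_add_ncard_of_subset hsub (Set.toFinite _)
  have e1 : edgeCount G = G.edgeSet.ncard := Nat.card_coe_set_eq _
  have e2 : edgeCount H = H.edgeSet.ncard := Nat.card_coe_set_eq _
  omega

/-- If `G = L_r[x,y,y,n₁,…,n_r]` is a pentagon-`r`-partite graph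
(so `x ≤ y ≤ nᵢ` for all `i ∈ [r]`), then `D_r(G) = x·y`. -/
theorem stmt10 (r x y : ℕ) (hr : 2 ≤ r) (nn : ℕ → ℕ) (hxy : x ≤ y)
    (hyn : ∀ i < r, y ≤ nn i) :
    minDel r (pentagonBlowup r x y nn) = x * y := by
  classical
  have hmem : x * y ∈ {k | ∃ H, H ≤ pentagonBlowup r x y nn ∧ H.Colorable r ∧
      edgeCount (pentagonBlowup r x y nn) = edgeCount H + k} :=
    ⟨Hdel r x y nn, Hdel_le r x y nn, Hdel_colorable r x y hr nn, count_del r x y hr nn⟩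
  refine le_antisymm (Nat.sInf_le hmem) (le_csInf ⟨_, hmem⟩ ?_)
  rintro k ⟨H, hle, hcol, hcount⟩
  obtain ⟨C⟩ := hcol
  set c : ((i : Fin (r+3)) × Fin (pentSizes x y nn i.val)) → Fin r := fun v => C v with hc
  have hmono := mono_lb hr hxy hyn c
  set M : Set (((i : Fin (r+3)) × Fin (pentSizes x y nn i.val)) ×
      ((i : Fin (r+3)) × Fin (pentSizes x y nn i.val))) :=
    {p | (pentagonBlowup r x y nn).Adj p.1 p.2 ∧ c p.1 = c p.2 ∧ p.1.1 < p.2.1} with hM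
  have himg : Function.uncurry Sym2.mk '' M ⊆ (pentagonBlowup r x y nn).edgeSet \ H.edgeSet := by
    rintro e ⟨⟨u, v⟩, hm, rfl⟩
    exact ⟨hm.1, fun hH => C.valid hH hm.2.1⟩
  have hinj : Set.InjOn (Function.uncurry Sym2.mk) M := by
    rintro ⟨u, v⟩ hu ⟨u', v'⟩ hv' h
    change s(u, v) = s(u', v') at h
    rw [Sym2.mk_eq_mk_iff (p := (u, v)) (q := (u', v'))] at h
    rcases h with h | h
    · exact h
    · injection h with h1 h2
      subst h1; subst h2
      exact absurd hv'.2.2 (asymm hu.2.2)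
  have hchain : x * y ≤ ((pentagonBlowup r x y nn).edgeSet \ H.edgeSet).ncard := by
    calc x * y ≤ M.ncard := hmono
      _ = (Function.uncurry Sym2.mk '' M).ncard := (Set.ncard_image_of_injOn hinj).symm
      _ ≤ _ := Set.ncard_le_ncard himg (Set.toFinite _)
  have hkey := Set.ncard_diff_add_ncard_of_subset (edgeSet_mono hle) (Set.toFinite _)
  have e1 : edgeCount (pentagonBlowup r x y nn) = (pentagonBlowup r x y nn).edgeSet.ncard :=
    Nat.card_coe_set_eq _
  have e2 : edgeCount H = H.edgeSet.ncard := Nat.card_coe_set_eq _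
  omega
end

section
/- Let r ≥ 2 be an integer and let δ be a real number with 0 < δ < r^{−60} and δ·n² > n/r. Suppose G is a K_{r+1}-free graph on n vertices with e(G) ≥ t_r(n) − δ·n². Then there is a vertex subset S ⊆ V(G) with |S| ≤ 2δ·r^{10}·n such that every vertex v ∉ S satisfies d_{G−S}(v) ≥ n·((r−1)/r − r^{−10}), where d_{G−S}(v) is the degree of v in the induced subgraph G − S. -/
open SimpleGraph

/-!
Delete vertices of degree below `D = n((r-1)/r - r⁻¹⁰)` one at a time, stopping after
`K = ⌊2δr¹⁰n⌋ + 1` deletions. Each deletion loses fewer than `D` edges, so after `k` deletions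
the remaining `K_{r+1}`-free graph on `n - k` vertices still has at least `e(G) - kD` edges.
Comparing with Turán's bound `(1 - 1/r)(n - k)²/2`, and using
`t_r(n) ≥ (1 - 1/r)n²/2 - r²`, gives `k n r⁻¹⁰ ≤ δn² + k²/2 + r²`, which
is incompatible with `k = K` as long as `δ < r⁻⁶⁰` and `δn² > n/r`; hence the process stops
early, at a set of minimum degree at least `D`.
-/

open Finset

namespace SimpleGraph

lemma edgeCount_eq_card_edgeFinset {V : Type*} (G : SimpleGraph V) [Fintype G.edgeSet] :
    edgeCount G = #G.edgeFinset := by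
  rw [edgeCount, Nat.card_eq_fintype_card, edgeFinset_card]

variable {V : Type*} [Fintype V]

lemma CliqueFree.two_mul_mul_card_edgeFinset_le {G : SimpleGraph V} [DecidableRel G.Adj]
    {r : ℕ} (hG : G.CliqueFree (r + 1)) :
    2 * r * #G.edgeFinset ≤ (r - 1) * Fintype.card V ^ 2 := by
  have h : #G.edgeFinset ≤ #(turanGraph (Fintype.card V) r).edgeFinset := by
    rw [card_edgeFinset_turanGraph]
    exact hG.card_edgeFinset_le
  exact (Nat.mul_le_mul_left _ h).trans mul_card_edgeFinset_turanGraph_le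

variable [DecidableEq V] (G : SimpleGraph V) [DecidableRel G.Adj]

lemma card_edgeFinset_induce_le_erase_add (T : Finset V) (v : V) :
    #(G.induce (T : Set V)).edgeFinset ≤
      #(G.induce ((T.erase v : Finset V) : Set V)).edgeFinset + #{w ∈ T | G.Adj v w} := by
  simp only [← card_filter_edgeFinset_toFinset_subset, filter_edgeFinset_toFinset_subset]
  calc #(G.edgeFinset ∩ T.sym2)
      ≤ #((G.edgeFinset ∩ (T.erase v).sym2) ∪ {w ∈ T | G.Adj v w}.image (s(v, ·))) := by
        refine card_le_card fun e he => ?_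
        induction e with
        | _ a b =>
          simp only [mem_inter, mem_edgeFinset, mem_edgeSet, mk_mem_sym2_iff] at he
          obtain ⟨hab, ha, hb⟩ := he
          simp only [mem_union, mem_inter, mem_edgeFinset, mem_edgeSet, mk_mem_sym2_iff,
            mem_erase, mem_image, mem_filter]
          by_cases hav : a = v
          · subst hav; exact Or.inr ⟨b, ⟨hb, hab⟩, rfl⟩
          by_cases hbv : b = v
          · subst hbv; exact Or.inr ⟨a, ⟨ha, hab.symm⟩, Sym2.eq_swap⟩
          exact Or.inl ⟨hab, ⟨hav, ha⟩, hbv, hb⟩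
    _ ≤ #(G.edgeFinset ∩ (T.erase v).sym2) + #{w ∈ T | G.Adj v w} :=
        (card_union_le _ _).trans (Nat.add_le_add_left card_image_le _)

lemma exists_le_card_filter_adj_or_card_compl_eq (D : ℝ) (K : ℕ) :
    ∃ T : Finset V, #Tᶜ ≤ K ∧
      (#G.edgeFinset : ℝ) ≤ #(G.induce (T : Set V)).edgeFinset + #Tᶜ * D ∧
      (#Tᶜ = K ∨ ∀ v ∈ T, D ≤ #{w ∈ T | G.Adj v w}) := by
  set P : Finset V → Prop := fun T =>
    #Tᶜ ≤ K ∧ (#G.edgeFinset : ℝ) ≤ #(G.induce (T : Set V)).edgeFinset + #Tᶜ * D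
  have hP : P univ := by
    refine ⟨by simp, ?_⟩
    rw [← card_filter_edgeFinset_toFinset_subset]
    simp
  obtain ⟨T, hT, hmin⟩ := exists_min_image {T | P T} card ⟨univ, by simpa using hP⟩
  rw [mem_filter] at hT
  refine ⟨T, hT.2.1, hT.2.2, ?_⟩
  by_contra! h
  obtain ⟨hK, v, hv, hdeg⟩ := h
  have hcard : #(T.erase v)ᶜ = #Tᶜ + 1 := by
    have := card_add_card_compl T
    have := card_add_card_compl (T.erase v)
    have := card_erase_of_mem hv
    have := card_pos.2 ⟨v, hv⟩
    omega
  have hPerase : P (T.erase v) := by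
    refine ⟨by omega, ?_⟩
    have hstep : (#(G.induce (T : Set V)).edgeFinset : ℝ) ≤
        #(G.induce ((T.erase v : Finset V) : Set V)).edgeFinset + #{w ∈ T | G.Adj v w} := by
      exact_mod_cast card_edgeFinset_induce_le_erase_add G T v
    rw [hcard]
    push_cast
    linarith [hT.2.2]
  have := hmin (T.erase v) (by simpa using hPerase)
  have := card_erase_lt_of_mem hv
  omega

end SimpleGraph

lemma sub_one_mul_sq_le_two_mul_mul_turanNum_add (r n : ℕ) (hr : 0 < r) :
    (r - 1) * n ^ 2 ≤ 2 * r * turanNum r n + 2 * r ^ 3 := by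
  classical
  rw [turanNum, SimpleGraph.edgeCount_eq_card_edgeFinset, card_edgeFinset_turanGraph]
  set s := n % r
  set a := (n ^ 2 - s ^ 2) * (r - 1)
  have hs : s < r := Nat.mod_lt n hr
  have hdiv : a < a / (2 * r) * (2 * r) + 2 * r := Nat.lt_div_mul_add (by omega)
  have hsplit : a + s ^ 2 * (r - 1) = (r - 1) * n ^ 2 := by
    rw [← add_mul, Nat.sub_add_cancel (Nat.pow_le_pow_left (Nat.mod_le n r) 2), mul_comm]
  have hs2 : s ^ 2 * (r - 1) + 2 * r ≤ 2 * r ^ 3 := by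
    have : s ^ 2 ≤ r ^ 2 := Nat.pow_le_pow_left hs.le 2
    cases r with
    | zero => omega
    | succ r => simp only [Nat.add_sub_cancel]; nlinarith
  nlinarith

namespace SimpleGraph

variable {V : Type*} [Fintype V] [DecidableEq V]

lemma CliqueFree.card_compl_mul_le {G : SimpleGraph V} [DecidableRel G.Adj] {r : ℕ}
    (hr : 0 < r) (hG : G.CliqueFree (r + 1)) {δ ε : ℝ} {T : Finset V}
    (he : (turanNum r (Fintype.card V) : ℝ) - δ * Fintype.card V ^ 2 ≤ #G.edgeFinset)
    (hT : (#G.edgeFinset : ℝ) ≤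
      #(G.induce (T : Set V)).edgeFinset + #Tᶜ * (Fintype.card V * ((r - 1) / r - ε))) :
    (#Tᶜ : ℝ) * Fintype.card V * ε ≤ δ * Fintype.card V ^ 2 + #Tᶜ ^ 2 / 2 + r ^ 2 := by
  set n := Fintype.card V
  set k := #Tᶜ
  have hTk : (#T : ℝ) = n - k := by
    rw [eq_sub_iff_add_eq]; exact_mod_cast card_add_card_compl T
  have hturanT : 2 * r * (#(G.induce (T : Set V)).edgeFinset : ℝ) ≤ (r - 1) * (n - k) ^ 2 := by
    have := (hG.comap (Embedding.induce (T : Set V)).isContained).two_mul_mul_card_edgeFinset_le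
    simp only [coe_sort_coe, Fintype.card_coe] at this
    have := (Nat.cast_le (α := ℝ)).2 this
    push_cast [Nat.cast_sub hr, hTk] at this
    exact this
  have hturan : ((r : ℝ) - 1) * n ^ 2 ≤ 2 * r * turanNum r n + 2 * r ^ 3 := by
    have := (Nat.cast_le (α := ℝ)).2 (sub_one_mul_sq_le_two_mul_mul_turanNum_add r n hr)
    push_cast [Nat.cast_sub hr] at this
    exact this
  have hr0 : (0 : ℝ) < r := by exact_mod_cast hr
  have hscaled := mul_le_mul_of_nonneg_left (he.trans hT) (by positivity : (0 : ℝ) ≤ 2 * r)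
  have hkD : 2 * r * (k * (n * ((r - 1) / r - ε))) = 2 * k * ((r - 1) * n - r * n * ε) := by
    field_simp
  rw [mul_add (2 * (r : ℝ)), hkD] at hscaled
  have hk2 : ((r : ℝ) - 1) * k ^ 2 ≤ r * k ^ 2 := by nlinarith [sq_nonneg (k : ℝ)]
  have key : 2 * r * (k * n * ε) ≤ 2 * r * (δ * n ^ 2 + k ^ 2 / 2 + r ^ 2) := by linarith
  exact le_of_mul_le_mul_left key (by positivity)

end SimpleGraph

lemma le_two_mul_pow_mul_of_le_add_sq {r δ k : ℝ} {n : ℕ} (hr : 2 ≤ r) (hδ0 : 0 < δ)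
    (hδ1 : δ < (r ^ 60)⁻¹) (hδn : n / r < δ * n ^ 2) (hk : k ≤ 2 * δ * r ^ 10 * n + 1)
    (hquad : k * n * (r ^ 10)⁻¹ ≤ δ * n ^ 2 + k ^ 2 / 2 + r ^ 2) :
    k ≤ 2 * δ * r ^ 10 * n := by
  set x := 2 * δ * r ^ 10 * n
  have hr0 : 0 < r := by linarith
  have hn : 0 < (n : ℝ) := Nat.cast_pos.2 (Nat.pos_of_ne_zero fun h => by simp [h] at hδn)
  have hδr60 : δ * r ^ 60 < 1 := by
    simpa [inv_mul_cancel₀ (by positivity : r ^ 60 ≠ 0)] using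
      mul_lt_mul_of_pos_right hδ1 (by positivity : 0 < r ^ 60)
  have hδnr : 1 < δ * n * r := by
    rw [div_lt_iff₀ hr0] at hδn
    nlinarith
  have hn59 : r ^ 59 < n := by
    have : δ * (r ^ 59 * r) < δ * (n * r) := by nlinarith
    exact lt_of_mul_lt_mul_right (lt_of_mul_lt_mul_left this hδ0.le) hr0.le
  have h2r (m : ℕ) : (2 : ℝ) ^ m ≤ r ^ m := pow_le_pow_left₀ (by norm_num) hr m
  have hδr20 : δ * r ^ 20 ≤ 1 / 8 := by
    have := h2r 40
    have : δ * r ^ 20 * r ^ 40 < 1 := by nlinarith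
    nlinarith
  have hδn2 : r ^ 58 < δ * n ^ 2 := by
    rw [div_lt_iff₀ hr0] at hδn
    nlinarith
  have hsq : x ^ 2 / 2 ≤ δ * n ^ 2 / 4 := by
    have hx2 : x ^ 2 / 2 = 2 * (δ * r ^ 20) * (δ * n ^ 2) := by ring
    rw [hx2]
    nlinarith [mul_le_mul_of_nonneg_right hδr20 (by positivity : 0 ≤ δ * (n : ℝ) ^ 2)]
  have hlin : x ≤ δ * n ^ 2 / 4 := by
    have := h2r 49
    have : 8 * r ^ 10 ≤ n := by nlinarith
    nlinarith
  have hconst : 1 / 2 + r ^ 2 ≤ δ * n ^ 2 / 4 := by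
    have := h2r 56
    nlinarith
  -- `k > x` would give `k n r⁻¹⁰ > 2δn²`, whereas `k²/2 + r² ≤ (x + 1)²/2 + r² ≤ 3δn²/4`.
  by_contra! hxk
  have : 2 * δ * n ^ 2 < k * n * (r ^ 10)⁻¹ := by
    have hx : x * n * (r ^ 10)⁻¹ = 2 * δ * n ^ 2 := by simp only [x]; field_simp
    rw [← hx]; gcongr
  nlinarith

/-- Let `r ≥ 2`, `0 < δ < r⁻⁶⁰`, `δn² > n/r`, and let `G` be a
`K_{r+1}`-free graph on `n` vertices with `e(G) ≥ t_r(n) - δn²`. Then there is `S ⊆ V(G)`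
with `|S| ≤ 2δr¹⁰n` such that every `v ∉ S` has degree at least `n((r-1)/r - r⁻¹⁰)` in
the induced subgraph `G - S`. -/
theorem stmt12 {V : Type} [Fintype V] (r n : ℕ) (hr : 2 ≤ r) (δ : ℝ)
    (hδ0 : 0 < δ) (hδ1 : δ < ((r : ℝ) ^ 60)⁻¹)
    (hcard : Fintype.card V = n)
    (hδn : (n : ℝ) / r < δ * n ^ 2)
    (G : SimpleGraph V) (hfree : G.CliqueFree (r + 1))
    (he : (turanNum r n : ℝ) - δ * n ^ 2 ≤ (edgeCount G : ℝ)) :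
    ∃ S : Set V, (Nat.card S : ℝ) ≤ 2 * δ * r ^ 10 * n ∧
      ∀ v ∉ S, (n : ℝ) * (((r : ℝ) - 1) / r - ((r : ℝ) ^ 10)⁻¹) ≤
        (Nat.card {w : V | w ∉ S ∧ G.Adj v w} : ℝ) := by
  classical
  subst hcard
  set x := 2 * δ * r ^ 10 * Fintype.card V
  obtain ⟨T, hTK, hTe, hstop⟩ := G.exists_le_card_filter_adj_or_card_compl_eq
    (Fintype.card V * ((r - 1) / r - ((r : ℝ) ^ 10)⁻¹)) (⌊x⌋₊ + 1)
  rw [SimpleGraph.edgeCount_eq_card_edgeFinset] at he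
  have hquad := hfree.card_compl_mul_le (by omega) he hTe
  have hkx : (#Tᶜ : ℝ) ≤ x := by
    refine le_two_mul_pow_mul_of_le_add_sq (by exact_mod_cast hr) hδ0 hδ1 hδn ?_ hquad
    have : (#Tᶜ : ℝ) ≤ ⌊x⌋₊ + 1 := by exact_mod_cast hTK
    linarith [Nat.floor_le (by positivity : 0 ≤ x)]
  have hdeg := hstop.resolve_left fun hK => by
    have : x < (#Tᶜ : ℝ) := by rw [hK]; push_cast; exact Nat.lt_floor_add_one x
    linarith
  refine ⟨((Tᶜ : Finset V) : Set V), ?_, fun v hv => ?_⟩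
  · rwa [Nat.card_coe_set_eq, Set.ncard_coe_finset]
  · have hvT : v ∈ T := by simpa using hv
    have hnbr : Nat.card {w : V | w ∉ ((Tᶜ : Finset V) : Set V) ∧ G.Adj v w} =
        #{w ∈ T | G.Adj v w} := by
      rw [← Set.ncard_coe_finset, ← Nat.card_coe_set_eq]
      congr; ext w; simp
    rw [hnbr]
    exact hdeg v hvT
end

section
/- Let r ≥ 2 and let G be a K_{r+1}-free graph on n vertices. If the minimum degree of G is strictly greater than ((3r−4)/(3r−1))·n, then G is r-partite. -/
open SimpleGraph

/-- (Andrásfai–Erdős–Sós) For `r ≥ 2`, a `K_{r+1}`-free graph on `n`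
vertices whose minimum degree is strictly greater than `((3r-4)/(3r-1))·n` is `r`-partite. -/
theorem stmt14 {V : Type} [Fintype V] (r : ℕ) (hr : 2 ≤ r) (G : SimpleGraph V)
    [DecidableRel G.Adj] (hfree : G.CliqueFree (r + 1))
    (hdeg : ∀ v : V, (3 * (r : ℝ) - 4) / (3 * (r : ℝ) - 1) * (Fintype.card V) <
      (G.degree v : ℝ)) :
    G.Colorable r := by
  cases isEmpty_or_nonempty V
  · exact Colorable.of_isEmpty r
  refine colorable_of_cliqueFree_lt_minDegree hfree ?_
  obtain ⟨v, hv⟩ := G.exists_minimal_degree_vertex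
  rw [hv]
  -- Mathlib's bound uses truncated subtraction and floor division in ℕ; `hr` makes the
  -- subtractions exact, and the floor only lowers the bound.
  have hfloor : (((3 * r - 4) * Fintype.card V / (3 * r - 1) : ℕ) : ℝ) ≤
      (3 * (r : ℝ) - 4) / (3 * (r : ℝ) - 1) * Fintype.card V := by
    refine Nat.cast_div_le.trans_eq ?_
    rw [Nat.cast_mul, Nat.cast_sub (by omega), Nat.cast_sub (by omega)]
    push_cast
    ring
  exact_mod_cast hfloor.trans_lt (hdeg v)
end

section
/- Let r ≥ 2 be an integer and G a K_{r+1}-free graph. Suppose u is a vertex of G and P_1,…,P_r are pairwise disjoint subsets of the neighborhood Γ(u) of u, each of size Δ ≥ 1. Suppose further that for i = 1, 2, B_i is a matching in G of size b_i such that each edge of B_i has exactly one endpoint in P_i and its other endpoint outside P_1 ∪ … ∪ P_r ∪ {u}, and the vertex sets of B_1 and B_2 are disjoint. Then at least Δ² + b_1·b_2 pairs {w, w'} with w ∈ P_i ∪ V(B_i), w' ∈ P_j ∪ V(B_j) for some i ≠ j are non-edges of G, where V(B_i) denotes the set of vertices covered by B_i. -/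
open SimpleGraph

/-- The set `P_i ∪ V(B_i)`, where `V(B_1)`, `V(B_2)` are the vertex sets of the matchings
`B_1` (attached to `P` index `0`) and `B_2` (attached to `P` index `1`), and `V(B_i) = ∅`
otherwise. -/
def pentQ {V : Type*} {r b1 b2 : ℕ} (P : Fin r → Finset V)
    (p1 q1 : Fin b1 → V) (p2 q2 : Fin b2 → V) (i : Fin r) : Set V :=
  (P i : Set V) ∪
    (if (i : ℕ) = 0 then Set.range p1 ∪ Set.range q1
     else if (i : ℕ) = 1 then Set.range p2 ∪ Set.range q2 else ∅)

open scoped Classical in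
/-- The set of non-edges (as unordered pairs of distinct nonadjacent vertices) inside `S`. -/
noncomputable def myNE {V : Type*} (G : SimpleGraph V) (S : Finset V) : Finset (Sym2 V) :=
  ((S ×ˢ S).filter fun p => p.1 ≠ p.2 ∧ ¬G.Adj p.1 p.2).image (fun p => s(p.1, p.2))

lemma myNE_mem {V : Type*} {G : SimpleGraph V} {S : Finset V} {e : Sym2 V} :
    e ∈ myNE G S ↔ ∃ a b, a ∈ S ∧ b ∈ S ∧ a ≠ b ∧ ¬G.Adj a b ∧ e = s(a, b) := by
  classical
  simp only [myNE, Finset.mem_image, Finset.mem_filter, Finset.mem_product]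
  constructor
  · rintro ⟨⟨a, b⟩, ⟨⟨ha, hb⟩, hne, hadj⟩, rfl⟩
    exact ⟨a, b, ha, hb, hne, hadj, rfl⟩
  · rintro ⟨a, b, ha, hb, hne, hadj, rfl⟩
    exact ⟨(a, b), ⟨⟨ha, hb⟩, hne, hadj⟩, rfl⟩

lemma myNE_card {V : Type*} [DecidableEq V] {r : ℕ} {G : SimpleGraph V}
    (hfree : G.CliqueFree (r + 1)) (S : Finset V) : S.card ≤ (myNE G S).card + r := by
  classical
  induction S using Finset.strongInductionOn with
  | _ S ih =>
    by_cases hc : S.card ≤ r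
    · omega
    · have hSclique : ¬ G.IsClique (S : Set V) := by
        intro hcl
        obtain ⟨t, hts, htc⟩ := Finset.exists_subset_card_eq (show r + 1 ≤ S.card by omega)
        exact hfree t ⟨hcl.subset (by exact_mod_cast hts), htc⟩
      rw [SimpleGraph.isClique_iff, Set.Pairwise] at hSclique
      push_neg at hSclique
      obtain ⟨a, ha, b, hb, hne, hnadj⟩ := hSclique
      have haS : a ∈ S := by exact_mod_cast ha
      have hbS : b ∈ S := by exact_mod_cast hb
      have hsub : myNE G (S.erase a) ⊆ myNE G S := by
        intro e he; rw [myNE_mem] at he ⊢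
        obtain ⟨x, y, hx, hy, h1, h2, h3⟩ := he
        exact ⟨x, y, Finset.mem_of_mem_erase hx, Finset.mem_of_mem_erase hy, h1, h2, h3⟩
      have hnotin : s(a, b) ∉ myNE G (S.erase a) := by
        rw [myNE_mem]; rintro ⟨x, y, hx, hy, h1, h2, h3⟩
        rw [Sym2.eq_iff] at h3
        rcases h3 with ⟨rfl, rfl⟩ | ⟨rfl, rfl⟩
        · exact Finset.notMem_erase a S hx
        · exact Finset.notMem_erase a S hy
      have hin : s(a, b) ∈ myNE G S := myNE_mem.2 ⟨a, b, haS, hbS, hne, hnadj, rfl⟩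
      have h1 : (myNE G (S.erase a)).card + 1 ≤ (myNE G S).card := by
        have hss : myNE G (S.erase a) ⊂ myNE G S :=
          (Finset.ssubset_iff_of_subset hsub).2 ⟨s(a, b), hin, hnotin⟩
        have := Finset.card_lt_card hss
        omega
      have h2 := ih (S.erase a) (Finset.erase_ssubset haS)
      have h3 : (S.erase a).card = S.card - 1 := Finset.card_erase_of_mem haS
      omega

lemma myProd2 {n : ℕ} (i j : Fin n) (hij : i ≠ j) (f : Fin n → ℕ) (a b d : ℕ)
    (hi : f i = a) (hj : f j = b) (hk : ∀ k, k ≠ i → k ≠ j → f k = d) :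
    ∏ k, f k = a * b * d ^ (n - 2) := by
  classical
  rw [← Finset.mul_prod_erase _ f (Finset.mem_univ i),
    ← Finset.mul_prod_erase _ f (Finset.mem_erase.2 ⟨hij.symm, Finset.mem_univ j⟩)]
  have hcongr : ∀ k ∈ (Finset.univ.erase i).erase j, f k = d := by
    intro k hk'
    have h1 := Finset.mem_erase.1 hk'
    have h2 := Finset.mem_erase.1 h1.2
    exact hk k h2.1 h1.1
  rw [Finset.prod_congr rfl hcongr, Finset.prod_const]
  have hcard : ((Finset.univ.erase i).erase j).card = n - 2 := by
    rw [Finset.card_erase_of_mem (Finset.mem_erase.2 ⟨hij.symm, Finset.mem_univ j⟩),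
      Finset.card_erase_of_mem (Finset.mem_univ i), Finset.card_univ, Fintype.card_fin]
    omega
  rw [hcard, hi, hj]; ring

open scoped Classical in
/-- The matching-partner function: sends `q1 s ↦ p1 s`, `q2 t ↦ p2 t`, else identity. -/
noncomputable def myPartner {V : Type*} {b1 b2 : ℕ} (p1 q1 : Fin b1 → V) (p2 q2 : Fin b2 → V)
    (v : V) : V :=
  if h : ∃ s, q1 s = v then p1 (Classical.choose h)
  else if h : ∃ t, q2 t = v then p2 (Classical.choose h)
  else v

/-- Modified parts for the transversal double count. -/
noncomputable def myZ {V : Type*} [DecidableEq V] {r b1 b2 : ℕ} (P : Fin r → Finset V)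
    (p1 q1 : Fin b1 → V) (p2 q2 : Fin b2 → V) (i : Fin r) : Finset V :=
  if (i : ℕ) = 0 then (P i \ Finset.univ.image p1) ∪ Finset.univ.image q1
  else if (i : ℕ) = 1 then (P i \ Finset.univ.image p2) ∪ Finset.univ.image q2
  else P i

open scoped Classical in
/-- The witness vertex set of a transversal. -/
noncomputable def myW {V : Type*} [DecidableEq V] {r b1 b2 : ℕ} (u : V) (P : Fin r → Finset V)
    (p1 q1 : Fin b1 → V) (p2 q2 : Fin b2 → V) (τ : Fin r → V) : Finset V :=
  (if ∀ i, τ i ∈ P i then {u} else ∅) ∪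
    Finset.univ.biUnion fun i => {τ i, myPartner p1 q1 p2 q2 (τ i)}

section aux
variable {V : Type} [Fintype V] [DecidableEq V] {r b1 b2 : ℕ}
  {P : Fin r → Finset V} {p1 q1 : Fin b1 → V} {p2 q2 : Fin b2 → V}

lemma pr_eq_self {v : V} (h1 : ∀ s, q1 s ≠ v) (h2 : ∀ t, q2 t ≠ v) :
    myPartner p1 q1 p2 q2 v = v := by
  unfold myPartner
  rw [dif_neg (not_exists.2 h1), dif_neg (not_exists.2 h2)]

lemma pr_q1 (hiq1 : Function.Injective q1) (s : Fin b1) :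
    myPartner p1 q1 p2 q2 (q1 s) = p1 s := by
  unfold myPartner
  rw [dif_pos ⟨s, rfl⟩]
  exact congrArg p1 (hiq1 (Classical.choose_spec (⟨s, rfl⟩ : ∃ s', q1 s' = q1 s)))

lemma pr_q2 (hiq2 : Function.Injective q2) (hq12 : ∀ s t, q1 s ≠ q2 t) (t : Fin b2) :
    myPartner p1 q1 p2 q2 (q2 t) = p2 t := by
  unfold myPartner
  rw [dif_neg (show ¬∃ s, q1 s = q2 t from fun ⟨s, hs⟩ => hq12 s t hs), dif_pos ⟨t, rfl⟩]
  exact congrArg p2 (hiq2 (Classical.choose_spec (⟨t, rfl⟩ : ∃ t', q2 t' = q2 t)))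

lemma myZ_struct (hr : 2 ≤ r)
    (hp1 : ∀ t, p1 t ∈ P ⟨0, by omega⟩) (hp2 : ∀ t, p2 t ∈ P ⟨1, by omega⟩)
    (hq1P : ∀ t i, q1 t ∉ P i) (hq2P : ∀ t i, q2 t ∉ P i)
    (hiq1 : Function.Injective q1) (hiq2 : Function.Injective q2)
    (hq12 : ∀ s t, q1 s ≠ q2 t)
    {i : Fin r} {v : V} (hv : v ∈ myZ P p1 q1 p2 q2 i) :
    (v ∈ P i ∧ myPartner p1 q1 p2 q2 v = v
        ∧ ((i : ℕ) = 0 → ∀ s, v ≠ p1 s) ∧ ((i : ℕ) = 1 → ∀ t, v ≠ p2 t))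
    ∨ ((i : ℕ) = 0 ∧ ∃ s, v = q1 s ∧ myPartner p1 q1 p2 q2 v = p1 s)
    ∨ ((i : ℕ) = 1 ∧ ∃ t, v = q2 t ∧ myPartner p1 q1 p2 q2 v = p2 t) := by
  unfold myZ at hv
  have hprv : (∃ j, v ∈ P j) → myPartner p1 q1 p2 q2 v = v := by
    rintro ⟨j, hj⟩
    exact pr_eq_self (fun s h => hq1P s j (h ▸ hj)) (fun t h => hq2P t j (h ▸ hj))
  by_cases h0 : (i : ℕ) = 0
  · rw [if_pos h0] at hv
    rcases Finset.mem_union.1 hv with hv | hv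
    · rcases Finset.mem_sdiff.1 hv with ⟨hvP, hvp⟩
      refine Or.inl ⟨hvP, hprv ⟨i, hvP⟩, fun _ s hs => hvp ?_, fun h1 => by omega⟩
      exact hs ▸ Finset.mem_image.2 ⟨s, Finset.mem_univ s, rfl⟩
    · obtain ⟨s, _, rfl⟩ := Finset.mem_image.1 hv
      exact Or.inr (Or.inl ⟨h0, s, rfl, pr_q1 hiq1 s⟩)
  · by_cases h1 : (i : ℕ) = 1
    · rw [if_neg h0, if_pos h1] at hv
      rcases Finset.mem_union.1 hv with hv | hv
      · rcases Finset.mem_sdiff.1 hv with ⟨hvP, hvp⟩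
        refine Or.inl ⟨hvP, hprv ⟨i, hvP⟩, fun h => absurd h h0, fun _ t ht => hvp ?_⟩
        exact ht ▸ Finset.mem_image.2 ⟨t, Finset.mem_univ t, rfl⟩
      · obtain ⟨t, _, rfl⟩ := Finset.mem_image.1 hv
        exact Or.inr (Or.inr ⟨h1, t, rfl, pr_q2 hiq2 hq12 t⟩)
    · rw [if_neg h0, if_neg h1] at hv
      exact Or.inl ⟨hv, hprv ⟨i, hv⟩, fun h => absurd h h0, fun h => absurd h h1⟩

end aux

/-- Let `G` be `K_{r+1}`-free, `u` a vertex, `P₁,…,P_r ⊆ Γ(u)` pairwise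
disjoint sets of size `Δ ≥ 1`, and for `i = 1,2` let `Bᵢ` be a matching of size `bᵢ`, each
edge having one endpoint in `Pᵢ` and the other outside `P₁ ∪ … ∪ P_r ∪ {u}`, with `V(B₁)`
and `V(B₂)` disjoint. Then at least `Δ² + b₁b₂` pairs `{w, w'}` with `w ∈ Pᵢ ∪ V(Bᵢ)`,
`w' ∈ Pⱼ ∪ V(Bⱼ)`, `i ≠ j`, are non-edges of `G`. -/
theorem stmt16 {V : Type} [Fintype V] [DecidableEq V] (r : ℕ) (hr : 2 ≤ r)
    (G : SimpleGraph V) (hfree : G.CliqueFree (r + 1))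
    (u : V) (P : Fin r → Finset V) (D : ℕ) (hD : 1 ≤ D)
    (hPnbr : ∀ i, (P i : Set V) ⊆ G.neighborSet u)
    (hPdisj : Pairwise fun i j => Disjoint (P i) (P j))
    (hPcard : ∀ i, (P i).card = D)
    (b1 b2 : ℕ) (p1 q1 : Fin b1 → V) (p2 q2 : Fin b2 → V)
    (hp1 : ∀ t, p1 t ∈ P ⟨0, by omega⟩) (hp2 : ∀ t, p2 t ∈ P ⟨1, by omega⟩)
    (hq1 : ∀ t, q1 t ∉ (⋃ i, (P i : Set V)) ∪ {u})
    (hq2 : ∀ t, q2 t ∉ (⋃ i, (P i : Set V)) ∪ {u})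
    (hadj1 : ∀ t, G.Adj (p1 t) (q1 t)) (hadj2 : ∀ t, G.Adj (p2 t) (q2 t))
    (hip1 : Function.Injective p1) (hiq1 : Function.Injective q1)
    (hip2 : Function.Injective p2) (hiq2 : Function.Injective q2)
    (hm1 : ∀ s t, p1 s ≠ q1 t) (hm2 : ∀ s t, p2 s ≠ q2 t)
    (hB12 : Disjoint (Set.range p1 ∪ Set.range q1) (Set.range p2 ∪ Set.range q2)) :
    D ^ 2 + b1 * b2 ≤
      Nat.card {e : Sym2 V | ∃ i j : Fin r, i ≠ j ∧
        ∃ w ∈ pentQ P p1 q1 p2 q2 i, ∃ w' ∈ pentQ P p1 q1 p2 q2 j,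
          w ≠ w' ∧ e = s(w, w') ∧ ¬G.Adj w w'} := by
  classical
  set i0 : Fin r := ⟨0, by omega⟩ with hi0def
  set i1 : Fin r := ⟨1, by omega⟩ with hi1def
  have hi01 : i0 ≠ i1 := by simp [hi0def, hi1def, Fin.ext_iff]
  -- basic consequences of the hypotheses
  have hq1P : ∀ t i, q1 t ∉ P i := by
    intro t i h
    exact hq1 t (Set.mem_union_left _ (Set.mem_iUnion.2 ⟨i, by exact_mod_cast h⟩))
  have hq2P : ∀ t i, q2 t ∉ P i := by
    intro t i h
    exact hq2 t (Set.mem_union_left _ (Set.mem_iUnion.2 ⟨i, by exact_mod_cast h⟩))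
  have hq1u : ∀ t, q1 t ≠ u := fun t h => hq1 t (Set.mem_union_right _ (by simp [h]))
  have hq2u : ∀ t, q2 t ≠ u := fun t h => hq2 t (Set.mem_union_right _ (by simp [h]))
  have hq12 : ∀ s t, q1 s ≠ q2 t := by
    intro s t h
    exact Set.disjoint_left.mp hB12 (Or.inr ⟨s, rfl⟩) (by rw [h]; exact Or.inr ⟨t, rfl⟩)
  have huP : ∀ i, u ∉ P i := by
    intro i h
    exact G.irrefl ((SimpleGraph.mem_neighborSet G u u).1 (hPnbr i (by exact_mod_cast h)))
  have hp1' : ∀ t, p1 t ∈ P i0 := hp1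
  have hp2' : ∀ t, p2 t ∈ P i1 := hp2
  -- structure of the modified parts
  have hstruct : ∀ {i : Fin r} {v : V}, v ∈ myZ P p1 q1 p2 q2 i →
      (v ∈ P i ∧ myPartner p1 q1 p2 q2 v = v
          ∧ ((i : ℕ) = 0 → ∀ s, v ≠ p1 s) ∧ ((i : ℕ) = 1 → ∀ t, v ≠ p2 t))
      ∨ ((i : ℕ) = 0 ∧ ∃ s, v = q1 s ∧ myPartner p1 q1 p2 q2 v = p1 s)
      ∨ ((i : ℕ) = 1 ∧ ∃ t, v = q2 t ∧ myPartner p1 q1 p2 q2 v = p2 t) :=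
    fun hv => myZ_struct hr hp1 hp2 hq1P hq2P hiq1 hiq2 hq12 hv
  -- blocks lie in the "colour classes" C i
  have hCsub : ∀ (i : Fin r) (v : V), v ∈ myZ P p1 q1 p2 q2 i →
      ∀ a ∈ ({v, myPartner p1 q1 p2 q2 v} : Finset V),
      a ∈ P i ∨ ((i : ℕ) = 0 ∧ ∃ s, a = q1 s) ∨ ((i : ℕ) = 1 ∧ ∃ t, a = q2 t) := by
    intro i v hv a ha
    rcases hstruct hv with ⟨hvP, hpr, -, -⟩ | ⟨h0, s, hvs, hpr⟩ | ⟨h1, t, hvt, hpr⟩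
    · rw [hpr] at ha
      simp only [Finset.mem_insert, Finset.mem_singleton, or_self] at ha
      exact Or.inl (ha ▸ hvP)
    · rw [hpr, hvs] at ha
      rcases Finset.mem_insert.1 ha with rfl | ha
      · exact Or.inr (Or.inl ⟨h0, s, rfl⟩)
      · rw [Finset.mem_singleton] at ha
        have hii : i = i0 := Fin.val_injective (by simpa [hi0def] using h0)
        exact Or.inl (by rw [ha, hii]; exact hp1' s)
    · rw [hpr, hvt] at ha
      rcases Finset.mem_insert.1 ha with rfl | ha
      · exact Or.inr (Or.inr ⟨h1, t, rfl⟩)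
      · rw [Finset.mem_singleton] at ha
        have hii : i = i1 := Fin.val_injective (by simpa [hi1def] using h1)
        exact Or.inl (by rw [ha, hii]; exact hp2' t)
  -- the colour classes are pairwise disjoint
  have hCdisj : ∀ (i j : Fin r), i ≠ j → ∀ a : V,
      (a ∈ P i ∨ ((i : ℕ) = 0 ∧ ∃ s, a = q1 s) ∨ ((i : ℕ) = 1 ∧ ∃ t, a = q2 t)) →
      (a ∈ P j ∨ ((j : ℕ) = 0 ∧ ∃ s, a = q1 s) ∨ ((j : ℕ) = 1 ∧ ∃ t, a = q2 t)) → False := by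
    intro i j hij a hi hj
    rcases hi with hi | ⟨h0, s, rfl⟩ | ⟨h1, t, rfl⟩ <;>
      rcases hj with hj | ⟨h0', s', hs'⟩ | ⟨h1', t', ht'⟩
    · exact Finset.disjoint_left.mp (hPdisj hij) hi hj
    · exact hq1P s' i (hs' ▸ hi)
    · exact hq2P t' i (ht' ▸ hi)
    · exact hq1P s j hj
    · exact hij (Fin.val_injective (by omega))
    · exact hq12 s t' ht'
    · exact hq2P t j hj
    · exact hq12 s' t hs'.symm
    · exact hij (Fin.val_injective (by omega))
  -- a vertex determines its block
  have hdet : ∀ (i : Fin r) (v v' : V), v ∈ myZ P p1 q1 p2 q2 i → v' ∈ myZ P p1 q1 p2 q2 i →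
      ∀ a : V, a ∈ ({v, myPartner p1 q1 p2 q2 v} : Finset V) →
      a ∈ ({v', myPartner p1 q1 p2 q2 v'} : Finset V) → v = v' := by
    intro i v v' hv hv' a ha ha'
    rcases hstruct hv with ⟨hvP, hpr, hv0, hv1⟩ | ⟨h0, s, hvs, hpr⟩ | ⟨h1, t, hvt, hpr⟩ <;>
      rcases hstruct hv' with ⟨hvP', hpr', hv0', hv1'⟩ | ⟨h0', s', hvs', hpr'⟩ |
        ⟨h1', t', hvt', hpr'⟩
    · rw [hpr] at ha; rw [hpr'] at ha'
      simp only [Finset.mem_insert, Finset.mem_singleton, or_self] at ha ha'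
      rw [← ha, ← ha']
    · rw [hpr] at ha; rw [hpr', hvs'] at ha'
      simp only [Finset.mem_insert, Finset.mem_singleton, or_self] at ha
      rcases Finset.mem_insert.1 ha' with rfl | ha'
      · exact absurd (ha ▸ hvP) (hq1P s' i)
      · rw [Finset.mem_singleton] at ha'
        exact absurd (ha.symm.trans ha') (hv0 h0' s')
    · rw [hpr] at ha; rw [hpr', hvt'] at ha'
      simp only [Finset.mem_insert, Finset.mem_singleton, or_self] at ha
      rcases Finset.mem_insert.1 ha' with rfl | ha'
      · exact absurd (ha ▸ hvP) (hq2P t' i)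
      · rw [Finset.mem_singleton] at ha'
        exact absurd (ha.symm.trans ha') (hv1 h1' t')
    · rw [hpr, hvs] at ha; rw [hpr'] at ha'
      simp only [Finset.mem_insert, Finset.mem_singleton, or_self] at ha'
      rcases Finset.mem_insert.1 ha with rfl | ha
      · exact absurd (ha' ▸ hvP') (hq1P s i)
      · rw [Finset.mem_singleton] at ha
        exact absurd (ha'.symm.trans ha) (hv0' h0 s)
    · rw [hpr, hvs] at ha; rw [hpr', hvs'] at ha'
      rw [hvs, hvs']
      rcases Finset.mem_insert.1 ha with rfl | ha <;> rcases Finset.mem_insert.1 ha' with h' | ha'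
      · rw [h']
      · rw [Finset.mem_singleton] at ha'
        exact absurd ha'.symm (hm1 s' s)
      · rw [Finset.mem_singleton] at ha
        exact absurd (ha.symm.trans h') (hm1 s s')
      · rw [Finset.mem_singleton] at ha ha'
        rw [hip1 (ha.symm.trans ha')]
    · omega
    · rw [hpr, hvt] at ha; rw [hpr'] at ha'
      simp only [Finset.mem_insert, Finset.mem_singleton, or_self] at ha'
      rcases Finset.mem_insert.1 ha with rfl | ha
      · exact absurd (ha' ▸ hvP') (hq2P t i)
      · rw [Finset.mem_singleton] at ha
        exact absurd (ha'.symm.trans ha) (hv1' h1 t)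
    · omega
    · rw [hpr, hvt] at ha; rw [hpr', hvt'] at ha'
      rw [hvt, hvt']
      rcases Finset.mem_insert.1 ha with rfl | ha <;> rcases Finset.mem_insert.1 ha' with h' | ha'
      · rw [h']
      · rw [Finset.mem_singleton] at ha'
        exact absurd ha'.symm (hm2 t' t)
      · rw [Finset.mem_singleton] at ha
        exact absurd (ha.symm.trans h') (hm2 t t')
      · rw [Finset.mem_singleton] at ha ha'
        rw [hip2 (ha.symm.trans ha')]
  -- distinct vertices of a block are adjacent
  have hadjB : ∀ (i : Fin r) (v : V), v ∈ myZ P p1 q1 p2 q2 i → ∀ a b : V,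
      a ∈ ({v, myPartner p1 q1 p2 q2 v} : Finset V) →
      b ∈ ({v, myPartner p1 q1 p2 q2 v} : Finset V) → a ≠ b → G.Adj a b := by
    intro i v hv a b ha hb hab
    rcases hstruct hv with ⟨-, hpr, -, -⟩ | ⟨-, s, hvs, hpr⟩ | ⟨-, t, hvt, hpr⟩
    · rw [hpr] at ha hb
      simp only [Finset.mem_insert, Finset.mem_singleton, or_self] at ha hb
      exact absurd (ha.trans hb.symm) hab
    · rw [hpr, hvs] at ha hb
      simp only [Finset.mem_insert, Finset.mem_singleton] at ha hb
      rcases ha with rfl | rfl <;> rcases hb with rfl | rfl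
      · exact absurd rfl hab
      · exact (hadj1 s).symm
      · exact hadj1 s
      · exact absurd rfl hab
    · rw [hpr, hvt] at ha hb
      simp only [Finset.mem_insert, Finset.mem_singleton] at ha hb
      rcases ha with rfl | rfl <;> rcases hb with rfl | rfl
      · exact absurd rfl hab
      · exact (hadj2 t).symm
      · exact hadj2 t
      · exact absurd rfl hab
  -- block vertices are distinct from u
  have hnotu : ∀ (i : Fin r) (v : V), v ∈ myZ P p1 q1 p2 q2 i →
      ∀ a ∈ ({v, myPartner p1 q1 p2 q2 v} : Finset V), a ≠ u := by
    intro i v hv a ha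
    rcases hCsub i v hv a ha with h | ⟨-, s, rfl⟩ | ⟨-, t, rfl⟩
    · exact fun he => huP i (he ▸ h)
    · exact hq1u s
    · exact hq2u t
  -- membership in the witness set
  have hWmem : ∀ (τ : Fin r → V) (a : V), a ∈ myW u P p1 q1 p2 q2 τ ↔
      ((∀ i, τ i ∈ P i) ∧ a = u) ∨
        ∃ i, a ∈ ({τ i, myPartner p1 q1 p2 q2 (τ i)} : Finset V) := by
    intro τ a
    unfold myW
    by_cases h : ∀ i, τ i ∈ P i <;> simp [h]
  -- cardinalities of the modified parts
  have himp1 : Finset.univ.image p1 ⊆ P i0 := by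
    intro x hx; obtain ⟨s, -, rfl⟩ := Finset.mem_image.1 hx; exact hp1' s
  have himp2 : Finset.univ.image p2 ⊆ P i1 := by
    intro x hx; obtain ⟨t, -, rfl⟩ := Finset.mem_image.1 hx; exact hp2' t
  have hb1card : (Finset.univ.image p1).card = b1 := by
    rw [Finset.card_image_of_injective _ hip1, Finset.card_univ, Fintype.card_fin]
  have hb2card : (Finset.univ.image p2).card = b2 := by
    rw [Finset.card_image_of_injective _ hip2, Finset.card_univ, Fintype.card_fin]
  have hq1card : (Finset.univ.image q1).card = b1 := by
    rw [Finset.card_image_of_injective _ hiq1, Finset.card_univ, Fintype.card_fin]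
  have hq2card : (Finset.univ.image q2).card = b2 := by
    rw [Finset.card_image_of_injective _ hiq2, Finset.card_univ, Fintype.card_fin]
  have hb1D : b1 ≤ D := by
    rw [← hb1card, ← hPcard i0]; exact Finset.card_le_card himp1
  have hb2D : b2 ≤ D := by
    rw [← hb2card, ← hPcard i1]; exact Finset.card_le_card himp2
  have hZ0 : myZ P p1 q1 p2 q2 i0 = (P i0 \ Finset.univ.image p1) ∪ Finset.univ.image q1 := by
    unfold myZ; rw [if_pos rfl]
  have hZ1 : myZ P p1 q1 p2 q2 i1 = (P i1 \ Finset.univ.image p2) ∪ Finset.univ.image q2 := by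
    unfold myZ; rw [if_neg (by simp [hi1def]), if_pos rfl]
  have hZcard : ∀ i, (myZ P p1 q1 p2 q2 i).card = D := by
    intro i
    by_cases h0 : (i : ℕ) = 0
    · have hii : i = i0 := Fin.val_injective (by simpa [hi0def] using h0)
      have hdisj : Disjoint (P i0 \ Finset.univ.image p1) (Finset.univ.image q1) := by
        rw [Finset.disjoint_left]; intro a ha hqm
        obtain ⟨t, -, rfl⟩ := Finset.mem_image.1 hqm
        exact hq1P t i0 (Finset.mem_sdiff.1 ha).1
      have hsd : (P i0 \ Finset.univ.image p1).card = D - b1 := by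
        rw [Finset.card_sdiff_of_subset himp1, hPcard, hb1card]
      rw [hii, hZ0, Finset.card_union_of_disjoint hdisj, hsd, hq1card]
      omega
    · by_cases h1 : (i : ℕ) = 1
      · have hii : i = i1 := Fin.val_injective (by simpa [hi1def] using h1)
        have hdisj : Disjoint (P i1 \ Finset.univ.image p2) (Finset.univ.image q2) := by
          rw [Finset.disjoint_left]; intro a ha hqm
          obtain ⟨t, -, rfl⟩ := Finset.mem_image.1 hqm
          exact hq2P t i1 (Finset.mem_sdiff.1 ha).1
        have hsd : (P i1 \ Finset.univ.image p2).card = D - b2 := by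
          rw [Finset.card_sdiff_of_subset himp2, hPcard, hb2card]
        rw [hii, hZ1, Finset.card_union_of_disjoint hdisj, hsd, hq2card]
        omega
      · have : myZ P p1 q1 p2 q2 i = P i := by unfold myZ; rw [if_neg h0, if_neg h1]
        rw [this, hPcard]
  -- the transversal family
  have hTcard : (Fintype.piFinset (myZ P p1 q1 p2 q2)).card = D ^ r := by
    rw [Fintype.card_piFinset, Finset.prod_congr rfl (fun i _ => hZcard i),
      Finset.prod_const, Finset.card_univ, Fintype.card_fin]
  -- the double-matching transversals
  have hTqq : ((Fintype.piFinset (myZ P p1 q1 p2 q2)).filter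
      (fun τ => τ i0 ∈ Finset.univ.image q1 ∧ τ i1 ∈ Finset.univ.image q2)).card
      = b1 * b2 * D ^ (r - 2) := by
    have heq : (Fintype.piFinset (myZ P p1 q1 p2 q2)).filter
        (fun τ => τ i0 ∈ Finset.univ.image q1 ∧ τ i1 ∈ Finset.univ.image q2)
        = Fintype.piFinset (fun k => if k = i0 then Finset.univ.image q1
            else if k = i1 then Finset.univ.image q2 else myZ P p1 q1 p2 q2 k) := by
      ext τ
      rw [Finset.mem_filter, Fintype.mem_piFinset, Fintype.mem_piFinset]
      constructor
      · rintro ⟨hT, hm1', hm2'⟩ k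
        by_cases hk0 : k = i0
        · subst hk0; rw [if_pos rfl]; exact hm1'
        · by_cases hk1 : k = i1
          · subst hk1; rw [if_neg hk0, if_pos rfl]; exact hm2'
          · rw [if_neg hk0, if_neg hk1]; exact hT k
      · intro h
        have hT : ∀ k, τ k ∈ myZ P p1 q1 p2 q2 k := by
          intro k
          have hk := h k
          by_cases hk0 : k = i0
          · subst hk0; rw [if_pos rfl] at hk
            rw [hZ0]; exact Finset.mem_union_right _ hk
          · by_cases hk1 : k = i1
            · subst hk1; rw [if_neg hk0, if_pos rfl] at hk
              rw [hZ1]; exact Finset.mem_union_right _ hk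
            · rwa [if_neg hk0, if_neg hk1] at hk
        refine ⟨hT, ?_, ?_⟩
        · have hk := h i0; rwa [if_pos rfl] at hk
        · have hk := h i1; rwa [if_neg (Ne.symm hi01), if_pos rfl] at hk
    rw [heq, Fintype.card_piFinset]
    refine myProd2 i0 i1 hi01 _ b1 b2 D ?_ ?_ ?_
    · rw [if_pos rfl]; exact hq1card
    · rw [if_neg (Ne.symm hi01), if_pos rfl]; exact hq2card
    · intro k hk0 hk1; rw [if_neg hk0, if_neg hk1]; exact hZcard k
  -- cardinality of the witness sets
  have hWkey : ∀ τ ∈ Fintype.piFinset (myZ P p1 q1 p2 q2),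
      (r + 1 ≤ (myW u P p1 q1 p2 q2 τ).card) ∧
      ((τ i0 ∈ Finset.univ.image q1 ∧ τ i1 ∈ Finset.univ.image q2) →
        r + 2 ≤ (myW u P p1 q1 p2 q2 τ).card) := by
    intro τ hτ
    rw [Fintype.mem_piFinset] at hτ
    have hBdisj : ∀ i ∈ (Finset.univ : Finset (Fin r)), ∀ j ∈ (Finset.univ : Finset (Fin r)),
        i ≠ j → Disjoint ({τ i, myPartner p1 q1 p2 q2 (τ i)} : Finset V)
          ({τ j, myPartner p1 q1 p2 q2 (τ j)} : Finset V) := by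
      intro i _ j _ hij
      rw [Finset.disjoint_left]; intro a hai haj
      exact (hCdisj i j hij a (hCsub i _ (hτ i) a hai) (hCsub j _ (hτ j) a haj)).elim
    have hBcard : (Finset.univ.biUnion
        (fun i => ({τ i, myPartner p1 q1 p2 q2 (τ i)} : Finset V))).card
        = ∑ i, ({τ i, myPartner p1 q1 p2 q2 (τ i)} : Finset V).card :=
      Finset.card_biUnion hBdisj
    have hone : ∀ i, 1 ≤ ({τ i, myPartner p1 q1 p2 q2 (τ i)} : Finset V).card :=
      fun i => Finset.card_pos.2 ⟨τ i, Finset.mem_insert_self _ _⟩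
    have h2 : ∀ i, τ i ∉ P i → ({τ i, myPartner p1 q1 p2 q2 (τ i)} : Finset V).card = 2 := by
      intro i hi
      rcases hstruct (hτ i) with ⟨hp, -, -, -⟩ | ⟨-, s, hs, hpr⟩ | ⟨-, t, ht, hpr⟩
      · exact absurd hp hi
      · rw [hpr, hs]; exact Finset.card_pair (fun h => hm1 s s h.symm)
      · rw [hpr, ht]; exact Finset.card_pair (fun h => hm2 t t h.symm)
    have hsum1 : ∑ _i : Fin r, (1:ℕ) = r := by simp
    have hcmp1 : ∀ iw : Fin r,
        ∑ i : Fin r, (if i = iw then (2:ℕ) else 1) = r + 1 := by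
      intro iw
      have hpt : ∀ i : Fin r, (if i = iw then (2:ℕ) else 1)
          = 1 + (if i = iw then 1 else 0) := fun i => by by_cases h : i = iw <;> simp [h]
      rw [Finset.sum_congr rfl (fun i _ => hpt i), Finset.sum_add_distrib,
        Finset.sum_ite_eq' Finset.univ iw (fun _ => 1), hsum1]
      simp
    have hcmp2 : ∑ i : Fin r, (if i = i0 then (2:ℕ) else if i = i1 then 2 else 1) = r + 2 := by
      have hpt : ∀ i : Fin r, (if i = i0 then (2:ℕ) else if i = i1 then 2 else 1)
          = 1 + ((if i = i0 then 1 else 0) + (if i = i1 then 1 else 0)) := by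
        intro i
        by_cases h : i = i0
        · subst h; simp [hi01]
        · by_cases h' : i = i1 <;> simp [h, h', Ne.symm hi01]
      rw [Finset.sum_congr rfl (fun i _ => hpt i), Finset.sum_add_distrib,
        Finset.sum_add_distrib, Finset.sum_ite_eq' Finset.univ i0 (fun _ => 1),
        Finset.sum_ite_eq' Finset.univ i1 (fun _ => 1), hsum1]
      simp
    by_cases hcond : ∀ i, τ i ∈ P i
    · have hqf : ¬ (τ i0 ∈ Finset.univ.image q1 ∧ τ i1 ∈ Finset.univ.image q2) := by
        rintro ⟨h1m, -⟩
        obtain ⟨s, -, hs⟩ := Finset.mem_image.1 h1m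
        exact hq1P s i0 (hs ▸ hcond i0)
      have hWeq : myW u P p1 q1 p2 q2 τ = {u} ∪ Finset.univ.biUnion
          (fun i => ({τ i, myPartner p1 q1 p2 q2 (τ i)} : Finset V)) := by
        unfold myW; rw [if_pos hcond]
      have hdu : Disjoint ({u} : Finset V) (Finset.univ.biUnion
          (fun i => ({τ i, myPartner p1 q1 p2 q2 (τ i)} : Finset V))) := by
        rw [Finset.disjoint_left]; intro a ha hb
        obtain ⟨i, -, hbi⟩ := Finset.mem_biUnion.1 hb
        exact hnotu i (τ i) (hτ i) a hbi (Finset.mem_singleton.1 ha)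
      have hsum : r ≤ ∑ i, ({τ i, myPartner p1 q1 p2 q2 (τ i)} : Finset V).card := by
        have hmono := Finset.sum_le_sum (fun i (_ : i ∈ Finset.univ) => hone i)
        rwa [hsum1] at hmono
      constructor
      · rw [hWeq, Finset.card_union_of_disjoint hdu, hBcard, Finset.card_singleton]
        exact add_comm 1 r ▸ Nat.add_le_add_left hsum 1
      · intro hq'; exact absurd hq' hqf
    · have hWeq : myW u P p1 q1 p2 q2 τ = Finset.univ.biUnion
          (fun i => ({τ i, myPartner p1 q1 p2 q2 (τ i)} : Finset V)) := by
        unfold myW; rw [if_neg hcond, Finset.empty_union]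
      push_neg at hcond
      obtain ⟨iw, hiw⟩ := hcond
      constructor
      · have hsum : r + 1 ≤ ∑ i, ({τ i, myPartner p1 q1 p2 q2 (τ i)} : Finset V).card := by
          have hmono : ∑ i : Fin r, (if i = iw then (2:ℕ) else 1)
              ≤ ∑ i, ({τ i, myPartner p1 q1 p2 q2 (τ i)} : Finset V).card := by
            refine Finset.sum_le_sum (fun i _ => ?_)
            by_cases h : i = iw
            · rw [h, h2 iw hiw]; simp
            · simpa [h] using hone i
          rwa [hcmp1 iw] at hmono
        rw [hWeq, hBcard]; exact hsum
      · rintro ⟨h1m, h2m⟩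
        obtain ⟨s, -, hs1⟩ := Finset.mem_image.1 h1m
        obtain ⟨t, -, hs2⟩ := Finset.mem_image.1 h2m
        have hiw0 : τ i0 ∉ P i0 := fun hp => hq1P s i0 (hs1 ▸ hp)
        have hiw1 : τ i1 ∉ P i1 := fun hp => hq2P t i1 (hs2 ▸ hp)
        have hsum : r + 2 ≤ ∑ i, ({τ i, myPartner p1 q1 p2 q2 (τ i)} : Finset V).card := by
          have hmono : ∑ i : Fin r, (if i = i0 then (2:ℕ) else if i = i1 then 2 else 1)
              ≤ ∑ i, ({τ i, myPartner p1 q1 p2 q2 (τ i)} : Finset V).card := by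
            refine Finset.sum_le_sum (fun i _ => ?_)
            by_cases h : i = i0
            · rw [h, h2 i0 hiw0]; simp
            · by_cases h' : i = i1
              · rw [h', h2 i1 hiw1]; simp [Ne.symm hi01]
              · simpa [h, h'] using hone i
          rwa [hcmp2] at hmono
        rw [hWeq, hBcard]; exact hsum
  
  -- both endpoints of a non-edge of a witness set lie in distinct blocks
  have hWboth : ∀ τ : Fin r → V, (∀ i, τ i ∈ myZ P p1 q1 p2 q2 i) → ∀ a b : V,
      a ∈ myW u P p1 q1 p2 q2 τ → b ∈ myW u P p1 q1 p2 q2 τ → ¬ G.Adj a b → a ≠ b →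
      ∃ i j, i ≠ j ∧ a ∈ ({τ i, myPartner p1 q1 p2 q2 (τ i)} : Finset V)
        ∧ b ∈ ({τ j, myPartner p1 q1 p2 q2 (τ j)} : Finset V) := by
    intro τ hT a b haW hbW hnadj hab
    have hblkP : ∀ j, (∀ i, τ i ∈ P i) → ∀ c : V,
        c ∈ ({τ j, myPartner p1 q1 p2 q2 (τ j)} : Finset V) → c = τ j := by
      intro j hcond c hc
      have hprj : myPartner p1 q1 p2 q2 (τ j) = τ j :=
        pr_eq_self (fun s h => hq1P s j (h ▸ hcond j)) (fun t h => hq2P t j (h ▸ hcond j))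
      rw [hprj] at hc
      simpa using hc
    have hne_u : ∀ c d : V, c ∈ myW u P p1 q1 p2 q2 τ → d ∈ myW u P p1 q1 p2 q2 τ →
        ¬ G.Adj c d → c ≠ d → c ≠ u := by
      intro c d hcW hdW hncd hcd hcu
      subst hcu
      rcases (hWmem τ d).1 hdW with ⟨hcond, rfl⟩ | ⟨j, hdj⟩
      · exact hcd rfl
      · rcases (hWmem τ c).1 hcW with ⟨hcond, -⟩ | ⟨i, hui⟩
        · have hd : d = τ j := hblkP j hcond d hdj
          refine hncd ?_
          rw [hd]
          exact (SimpleGraph.mem_neighborSet G c (τ j)).1 (hPnbr j (by exact_mod_cast hcond j))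
        · exact hnotu i (τ i) (hT i) c hui rfl
    have hau : a ≠ u := hne_u a b haW hbW hnadj hab
    have hbu : b ≠ u := hne_u b a hbW haW (fun h => hnadj h.symm) hab.symm
    obtain ⟨i, hai⟩ := ((hWmem τ a).1 haW).resolve_left (fun h => hau h.2)
    obtain ⟨j, hbj⟩ := ((hWmem τ b).1 hbW).resolve_left (fun h => hbu h.2)
    refine ⟨i, j, ?_, hai, hbj⟩
    rintro rfl
    exact hnadj (hadjB i (τ i) (hT i) a b hai hbj hab)
  -- blocks sit inside the pentQ classes
  have hQmem : ∀ (i : Fin r) (v : V), v ∈ myZ P p1 q1 p2 q2 i →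
      ∀ a ∈ ({v, myPartner p1 q1 p2 q2 v} : Finset V), a ∈ pentQ P p1 q1 p2 q2 i := by
    intro i v hv a ha
    rcases hCsub i v hv a ha with h | ⟨h0, s, rfl⟩ | ⟨h1, t, rfl⟩
    · exact Set.mem_union_left _ (by exact_mod_cast h)
    · refine Set.mem_union_right _ ?_
      rw [if_pos h0]
      exact Set.mem_union_right _ ⟨s, rfl⟩
    · refine Set.mem_union_right _ ?_
      rw [if_neg (show ¬ (i:ℕ) = 0 from fun hh => by clear * - hh h1; omega), if_pos h1]
      exact Set.mem_union_right _ ⟨t, rfl⟩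
  -- every counted non-edge lies in the target set
  have hNtar : ∀ e ∈ (Fintype.piFinset (myZ P p1 q1 p2 q2)).biUnion
      (fun τ => myNE G (myW u P p1 q1 p2 q2 τ)),
      e ∈ {e : Sym2 V | ∃ i j : Fin r, i ≠ j ∧
        ∃ w ∈ pentQ P p1 q1 p2 q2 i, ∃ w' ∈ pentQ P p1 q1 p2 q2 j,
          w ≠ w' ∧ e = s(w, w') ∧ ¬G.Adj w w'} := by
    intro e he
    obtain ⟨τ, hτT, heE⟩ := Finset.mem_biUnion.1 he
    rw [myNE_mem] at heE
    obtain ⟨a, b, haW, hbW, hab, hnadj, rfl⟩ := heE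
    have hTz : ∀ i, τ i ∈ myZ P p1 q1 p2 q2 i := Fintype.mem_piFinset.1 hτT
    obtain ⟨i, j, hij, hai, hbj⟩ := hWboth τ hTz a b haW hbW hnadj hab
    exact ⟨i, j, hij, a, hQmem i (τ i) (hTz i) a hai, b, hQmem j (τ j) (hTz j) b hbj,
      hab, rfl, hnadj⟩
  -- fiber bound
  have hfiber : ∀ e ∈ (Fintype.piFinset (myZ P p1 q1 p2 q2)).biUnion
      (fun τ => myNE G (myW u P p1 q1 p2 q2 τ)),
      ((Fintype.piFinset (myZ P p1 q1 p2 q2)).filter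
        (fun τ => e ∈ myNE G (myW u P p1 q1 p2 q2 τ))).card ≤ D ^ (r - 2) := by
    intro e he
    obtain ⟨τ₀, hτ₀T, he₀⟩ := Finset.mem_biUnion.1 he
    rw [myNE_mem] at he₀
    obtain ⟨a, b, haW₀, hbW₀, hab, hnadj, rfl⟩ := he₀
    have hT₀z : ∀ i, τ₀ i ∈ myZ P p1 q1 p2 q2 i := Fintype.mem_piFinset.1 hτ₀T
    obtain ⟨i, j, hij, hai₀, hbj₀⟩ := hWboth τ₀ hT₀z a b haW₀ hbW₀ hnadj hab
    have hss : (Fintype.piFinset (myZ P p1 q1 p2 q2)).filter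
        (fun τ => s(a, b) ∈ myNE G (myW u P p1 q1 p2 q2 τ))
        ⊆ Fintype.piFinset (fun k => if k = i then ({τ₀ i} : Finset V)
            else if k = j then {τ₀ j} else myZ P p1 q1 p2 q2 k) := by
      intro τ hτ
      obtain ⟨hτT, heτ⟩ := Finset.mem_filter.1 hτ
      have hTz : ∀ k, τ k ∈ myZ P p1 q1 p2 q2 k := Fintype.mem_piFinset.1 hτT
      rw [myNE_mem] at heτ
      obtain ⟨x, y, hxW, hyW, hxy, hnxy, hexy⟩ := heτ
      have haW : a ∈ myW u P p1 q1 p2 q2 τ ∧ b ∈ myW u P p1 q1 p2 q2 τ := by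
        rcases Sym2.eq_iff.1 hexy with ⟨h1, h2⟩ | ⟨h1, h2⟩
        · rw [h1, h2]; exact ⟨hxW, hyW⟩
        · rw [h1, h2]; exact ⟨hyW, hxW⟩
      obtain ⟨i', j', hij', hai, hbj⟩ := hWboth τ hTz a b haW.1 haW.2 hnadj hab
      have hii : i' = i := by
        by_contra hne
        exact hCdisj i' i hne a (hCsub i' _ (hTz i') a hai) (hCsub i _ (hT₀z i) a hai₀)
      have hjj : j' = j := by
        by_contra hne
        exact hCdisj j' j hne b (hCsub j' _ (hTz j') b hbj) (hCsub j _ (hT₀z j) b hbj₀)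
      subst hii; subst hjj
      have hτi : τ i' = τ₀ i' := hdet i' _ _ (hTz i') (hT₀z i') a hai hai₀
      have hτj : τ j' = τ₀ j' := hdet j' _ _ (hTz j') (hT₀z j') b hbj hbj₀
      rw [Fintype.mem_piFinset]
      intro k
      by_cases hk : k = i'
      · subst hk; rw [if_pos rfl]; exact Finset.mem_singleton.2 hτi
      · by_cases hk' : k = j'
        · subst hk'; rw [if_neg hk, if_pos rfl]; exact Finset.mem_singleton.2 hτj
        · rw [if_neg hk, if_neg hk']; exact hTz k
    calc ((Fintype.piFinset (myZ P p1 q1 p2 q2)).filter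
        (fun τ => s(a, b) ∈ myNE G (myW u P p1 q1 p2 q2 τ))).card
        ≤ (Fintype.piFinset (fun k => if k = i then ({τ₀ i} : Finset V)
            else if k = j then {τ₀ j} else myZ P p1 q1 p2 q2 k)).card :=
          Finset.card_le_card hss
      _ = 1 * 1 * D ^ (r - 2) := by
          rw [Fintype.card_piFinset]
          refine myProd2 i j hij _ 1 1 D ?_ ?_ ?_
          · rw [if_pos rfl]; exact Finset.card_singleton _
          · rw [if_neg (Ne.symm hij), if_pos rfl]; exact Finset.card_singleton _
          · intro k hk hk'; rw [if_neg hk, if_neg hk']; exact hZcard k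
      _ = D ^ (r - 2) := by ring
  -- the lower bound for the double count
  have hEsub : ∀ τ ∈ Fintype.piFinset (myZ P p1 q1 p2 q2),
      myNE G (myW u P p1 q1 p2 q2 τ) ⊆ (Fintype.piFinset (myZ P p1 q1 p2 q2)).biUnion
        (fun τ => myNE G (myW u P p1 q1 p2 q2 τ)) :=
    fun τ h => Finset.subset_biUnion_of_mem (fun τ => myNE G (myW u P p1 q1 p2 q2 τ)) h
  have hLB : D ^ r + b1 * b2 * D ^ (r - 2) ≤
      ∑ τ ∈ Fintype.piFinset (myZ P p1 q1 p2 q2), (myNE G (myW u P p1 q1 p2 q2 τ)).card := by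
    have hle : ∀ τ ∈ Fintype.piFinset (myZ P p1 q1 p2 q2),
        (if (τ i0 ∈ Finset.univ.image q1 ∧ τ i1 ∈ Finset.univ.image q2) then 2 else 1)
          ≤ (myNE G (myW u P p1 q1 p2 q2 τ)).card := by
      intro τ hτ
      have hNE := myNE_card hfree (myW u P p1 q1 p2 q2 τ)
      have h1 := (hWkey τ hτ).1
      have h2 := (hWkey τ hτ).2
      split_ifs with h
      · have h3 := h2 h
        clear * - h3 hNE h1
        omega
      · clear * - hNE h1
        omega
    have heq : ∑ τ ∈ Fintype.piFinset (myZ P p1 q1 p2 q2),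
        (if (τ i0 ∈ Finset.univ.image q1 ∧ τ i1 ∈ Finset.univ.image q2) then (2:ℕ) else 1)
        = (Fintype.piFinset (myZ P p1 q1 p2 q2)).card +
          ((Fintype.piFinset (myZ P p1 q1 p2 q2)).filter
            (fun τ => τ i0 ∈ Finset.univ.image q1 ∧ τ i1 ∈ Finset.univ.image q2)).card := by
      have hpt : ∀ τ : Fin r → V,
          (if (τ i0 ∈ Finset.univ.image q1 ∧ τ i1 ∈ Finset.univ.image q2) then (2:ℕ) else 1)
          = 1 + (if (τ i0 ∈ Finset.univ.image q1 ∧ τ i1 ∈ Finset.univ.image q2) then 1 else 0) :=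
        fun τ => by split_ifs <;> rfl
      rw [Finset.sum_congr rfl (fun τ _ => hpt τ), Finset.sum_add_distrib, Finset.sum_const,
        smul_eq_mul, mul_one, ← Finset.card_filter]
    calc D ^ r + b1 * b2 * D ^ (r - 2)
        = (Fintype.piFinset (myZ P p1 q1 p2 q2)).card +
          ((Fintype.piFinset (myZ P p1 q1 p2 q2)).filter
            (fun τ => τ i0 ∈ Finset.univ.image q1 ∧ τ i1 ∈ Finset.univ.image q2)).card := by
          rw [hTcard, hTqq]
      _ = ∑ τ ∈ Fintype.piFinset (myZ P p1 q1 p2 q2),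
          (if (τ i0 ∈ Finset.univ.image q1 ∧ τ i1 ∈ Finset.univ.image q2) then (2:ℕ) else 1) :=
          heq.symm
      _ ≤ _ := Finset.sum_le_sum hle
  -- the upper bound for the double count
  have hUB : ∑ τ ∈ Fintype.piFinset (myZ P p1 q1 p2 q2), (myNE G (myW u P p1 q1 p2 q2 τ)).card
      ≤ ((Fintype.piFinset (myZ P p1 q1 p2 q2)).biUnion
          (fun τ => myNE G (myW u P p1 q1 p2 q2 τ))).card * D ^ (r - 2) := by
    have h1 : ∀ τ ∈ Fintype.piFinset (myZ P p1 q1 p2 q2),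
        (myNE G (myW u P p1 q1 p2 q2 τ)).card
        = ∑ e ∈ (Fintype.piFinset (myZ P p1 q1 p2 q2)).biUnion
            (fun τ => myNE G (myW u P p1 q1 p2 q2 τ)),
            (if e ∈ myNE G (myW u P p1 q1 p2 q2 τ) then 1 else 0) := by
      intro τ hτ
      rw [← Finset.card_filter]
      congr 1
      ext e
      simp only [Finset.mem_filter]
      exact ⟨fun h => ⟨hEsub τ hτ h, h⟩, fun h => h.2⟩
    calc ∑ τ ∈ Fintype.piFinset (myZ P p1 q1 p2 q2), (myNE G (myW u P p1 q1 p2 q2 τ)).card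
        = ∑ τ ∈ Fintype.piFinset (myZ P p1 q1 p2 q2),
            ∑ e ∈ (Fintype.piFinset (myZ P p1 q1 p2 q2)).biUnion
              (fun τ => myNE G (myW u P p1 q1 p2 q2 τ)),
              (if e ∈ myNE G (myW u P p1 q1 p2 q2 τ) then 1 else 0) :=
          Finset.sum_congr rfl h1
      _ = ∑ e ∈ (Fintype.piFinset (myZ P p1 q1 p2 q2)).biUnion
            (fun τ => myNE G (myW u P p1 q1 p2 q2 τ)),
            ∑ τ ∈ Fintype.piFinset (myZ P p1 q1 p2 q2),
              (if e ∈ myNE G (myW u P p1 q1 p2 q2 τ) then 1 else 0) := Finset.sum_comm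
      _ = ∑ e ∈ (Fintype.piFinset (myZ P p1 q1 p2 q2)).biUnion
            (fun τ => myNE G (myW u P p1 q1 p2 q2 τ)),
            ((Fintype.piFinset (myZ P p1 q1 p2 q2)).filter
              (fun τ => e ∈ myNE G (myW u P p1 q1 p2 q2 τ))).card :=
          Finset.sum_congr rfl (fun e _ => (Finset.card_filter _ _).symm)
      _ ≤ ∑ _e ∈ (Fintype.piFinset (myZ P p1 q1 p2 q2)).biUnion
            (fun τ => myNE G (myW u P p1 q1 p2 q2 τ)), D ^ (r - 2) :=
          Finset.sum_le_sum hfiber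
      _ = _ := by rw [Finset.sum_const, smul_eq_mul]
  -- put everything together
  have hmain : D ^ 2 + b1 * b2 ≤ ((Fintype.piFinset (myZ P p1 q1 p2 q2)).biUnion
      (fun τ => myNE G (myW u P p1 q1 p2 q2 τ))).card := by
    have hsplit : (D ^ 2 + b1 * b2) * D ^ (r - 2) = D ^ r + b1 * b2 * D ^ (r - 2) := by
      rw [add_mul, ← pow_add]
      have h2r : 2 + (r - 2) = r := by clear * - hr; omega
      rw [h2r]
    have hkey : (D ^ 2 + b1 * b2) * D ^ (r - 2)
        ≤ ((Fintype.piFinset (myZ P p1 q1 p2 q2)).biUnion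
            (fun τ => myNE G (myW u P p1 q1 p2 q2 τ))).card * D ^ (r - 2) := by
      rw [hsplit]
      exact le_trans hLB hUB
    exact Nat.le_of_mul_le_mul_right hkey (pow_pos hD _)
  calc D ^ 2 + b1 * b2
      ≤ ((Fintype.piFinset (myZ P p1 q1 p2 q2)).biUnion
          (fun τ => myNE G (myW u P p1 q1 p2 q2 τ))).card := hmain
    _ = Nat.card (↑((Fintype.piFinset (myZ P p1 q1 p2 q2)).biUnion
          (fun τ => myNE G (myW u P p1 q1 p2 q2 τ))) : Set (Sym2 V)) :=
        (Nat.card_eq_finsetCard _).symm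
    _ ≤ Nat.card {e : Sym2 V | ∃ i j : Fin r, i ≠ j ∧
          ∃ w ∈ pentQ P p1 q1 p2 q2 i, ∃ w' ∈ pentQ P p1 q1 p2 q2 j,
            w ≠ w' ∧ e = s(w, w') ∧ ¬G.Adj w w'} :=
        Nat.card_mono (Set.toFinite _) (fun e he => hNtar e (Finset.mem_coe.1 he))
end
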